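/- arXiv:2108.01318 — 14 statements merged into one kernel-verified Lean document; each statement's English description precedes it below -/
import Mathlib

section
/- Let A, B : H ⇉ H be monotone set-valued operators on a real Hilbert space, T : H → H a map, γ > 0, and x, x̂ ∈ H. Suppose u, û, v, v̂ satisfy x − u ∈ γA(u), x̂ − û ∈ γA(û), 2u − x − γT(u) − v ∈ γB(v), and 2û − x̂ − γT(û) − v̂ ∈ γB(v̂). Then 0 ≤ ⟨x − x̂, (u−v) − (û−v̂)⟩ − ‖(u−v) − (û−v̂)‖² − γ⟨T(u) − T(û), v − v̂⟩. -/
open scoped InnerProductSpace Pointwise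

theorem stmt1 {H : Type*} [NormedAddCommGroup H] [InnerProductSpace ℝ H]
    (A B : H → Set H)
    (hA : ∀ x y a b, a ∈ A x → b ∈ A y → ⟪x - y, a - b⟫_ℝ ≥ 0)
    (hB : ∀ x y a b, a ∈ B x → b ∈ B y → ⟪x - y, a - b⟫_ℝ ≥ 0)
    (T : H → H) (γ : ℝ) (hγ : 0 < γ)
    (x xh u uh v vh : H)
    (hu : x - u ∈ γ • A u) (huh : xh - uh ∈ γ • A uh)
    (hv : (2 : ℝ) • u - x - γ • T u - v ∈ γ • B v)
    (hvh : (2 : ℝ) • uh - xh - γ • T uh - vh ∈ γ • B vh) :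
    0 ≤ ⟪x - xh, (u - v) - (uh - vh)⟫_ℝ - ‖(u - v) - (uh - vh)‖ ^ 2
        - γ * ⟪T u - T uh, v - vh⟫_ℝ := by
  obtain ⟨a, ha, haeq⟩ := hu
  obtain ⟨ah, hah, haheq⟩ := huh
  obtain ⟨b, hb, hbeq⟩ := hv
  obtain ⟨bh, hbh, hbheq⟩ := hvh
  have h1 : (0:ℝ) ≤ γ * ⟪u - uh, a - ah⟫_ℝ := mul_nonneg hγ.le (hA u uh a ah ha hah)
  have h2 : (0:ℝ) ≤ γ * ⟪v - vh, b - bh⟫_ℝ := mul_nonneg hγ.le (hB v vh b bh hb hbh)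
  have h1' : (0:ℝ) ≤ ⟪u - uh, (x - u) - (xh - uh)⟫_ℝ := by
    rw [← haeq, ← haheq, ← smul_sub, real_inner_smul_right]; exact h1
  have h2' : (0:ℝ) ≤ ⟪v - vh, ((2:ℝ) • u - x - γ • T u - v) - ((2:ℝ) • uh - xh - γ • T uh - vh)⟫_ℝ := by
    rw [← hbeq, ← hbheq, ← smul_sub, real_inner_smul_right]; exact h2
  have key : ⟪x - xh, (u - v) - (uh - vh)⟫_ℝ - ‖(u - v) - (uh - vh)‖ ^ 2
        - γ * ⟪T u - T uh, v - vh⟫_ℝ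
      = ⟪u - uh, (x - u) - (xh - uh)⟫_ℝ
        + ⟪v - vh, ((2:ℝ) • u - x - γ • T u - v) - ((2:ℝ) • uh - xh - γ • T uh - vh)⟫_ℝ := by
    rw [← real_inner_self_eq_norm_sq]
    simp only [inner_sub_left, inner_sub_right, real_inner_smul_left, real_inner_smul_right, two_smul, inner_add_left, inner_add_right]
    linear_combination -(real_inner_comm x u) + (real_inner_comm x uh) + (real_inner_comm x v) - (real_inner_comm x vh)
      + (real_inner_comm xh u) - (real_inner_comm xh uh) - (real_inner_comm xh v) + (real_inner_comm xh vh)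
      - (real_inner_comm u v) + (real_inner_comm uh v) - (real_inner_comm uh vh) + (real_inner_comm u vh)
      + γ * (real_inner_comm (T u) v) - γ * (real_inner_comm (T u) vh) - γ * (real_inner_comm (T uh) v) + γ * (real_inner_comm (T uh) vh)
  rw [key]; linarith
end

section
/- Let A, B : H ⇉ H be set-valued operators with single-valued full-domain resolvents J_{γA}, J_{γB}, let T : H → H, and γ > 0. Then u ∈ zer(A + B + T) if and only if there exists x ∈ H with u = J_{γA}(x) and u = J_{γB}(2u − x − γT(u)). Consequently, zer(A+B+T) = J_{γA}(Ω_γ), where Ω_γ := { x ∈ H : J_{γA}(x) = J_{γB}(2 J_{γA}(x) − x − γ T(J_{γA}(x))) }. -/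
open scoped InnerProductSpace Pointwise

theorem stmt3 {H : Type*} [NormedAddCommGroup H] [InnerProductSpace ℝ H]
    (A B : H → Set H) (T : H → H) (γ : ℝ) (hγ : 0 < γ)
    (JA JB : H → H)
    (hJA : ∀ x u, JA x = u ↔ x - u ∈ γ • A u)
    (hJB : ∀ x u, JB x = u ↔ x - u ∈ γ • B u) :
    (∀ u : H, (∃ a ∈ A u, ∃ b ∈ B u, a + b + T u = 0) ↔
        ∃ x : H, u = JA x ∧ u = JB ((2 : ℝ) • u - x - γ • T u)) ∧
    {u : H | ∃ a ∈ A u, ∃ b ∈ B u, a + b + T u = 0} =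
      JA '' {x : H | JA x = JB ((2 : ℝ) • JA x - x - γ • T (JA x))} := by
  have hγ0 : γ ≠ 0 := ne_of_gt hγ
  have key : ∀ u : H, (∃ a ∈ A u, ∃ b ∈ B u, a + b + T u = 0) ↔
      ∃ x : H, u = JA x ∧ u = JB ((2 : ℝ) • u - x - γ • T u) := by
    intro u
    constructor
    · rintro ⟨a, ha, b, hb, hab⟩
      refine ⟨u + γ • a, ?_, ?_⟩
      · symm; rw [hJA]
        have : u + γ • a - u = γ • a := by abel
        rw [this]
        exact Set.smul_mem_smul_set ha
      · symm; rw [hJB]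
        have h1 : (2 : ℝ) • u - (u + γ • a) - γ • T u - u = γ • b := by
          have : b = -a - T u := by
            have := hab
            linear_combination (norm := module) this
          rw [this]; rw [two_smul]; module
        rw [h1]
        exact Set.smul_mem_smul_set hb
    · rintro ⟨x, h1, h2⟩
      rw [eq_comm, hJA] at h1
      rw [eq_comm, hJB] at h2
      obtain ⟨a, ha, haa⟩ := h1
      obtain ⟨b, hb, hbb⟩ := h2
      refine ⟨a, ha, b, hb, ?_⟩
      simp only at haa hbb
      have : γ • (a + b + T u) = 0 := by
        rw [smul_add, smul_add, haa, hbb]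
        rw [two_smul]; abel
      rcases smul_eq_zero.mp this with h | h
      · exact absurd h hγ0
      · exact h
  refine ⟨key, ?_⟩
  ext u
  simp only [Set.mem_setOf_eq, Set.mem_image]
  rw [key u]
  constructor
  · rintro ⟨x, h1, h2⟩
    exact ⟨x, by rw [← h1]; exact h2, h1.symm⟩
  · rintro ⟨x, hx, hu⟩
    exact ⟨x, hu.symm, by rw [← hu]; exact hx⟩
end

section
/- Let A, B : H ⇉ H be maximally monotone, T : H → H β-cocoercive, γ > 0, and define the Davis–Yin operator DY_γ := J_{γB} ∘ (2J_{γA} − Id − γT∘J_{γA}) + Id − J_{γA}. Then Fix DY_γ = { u + γy : u ∈ zer(A+B+T), y ∈ (−B(u) − T(u)) ∩ A(u) }. -/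
open scoped InnerProductSpace Pointwise

theorem stmt5 {H : Type*} [NormedAddCommGroup H] [InnerProductSpace ℝ H]
    (A B : H → Set H)
    (hA : ∀ x y a b, a ∈ A x → b ∈ A y → ⟪x - y, a - b⟫_ℝ ≥ 0)
    (hB : ∀ x y a b, a ∈ B x → b ∈ B y → ⟪x - y, a - b⟫_ℝ ≥ 0)
    (hAmax : ∀ x a, (∀ y b, b ∈ A y → ⟪x - y, a - b⟫_ℝ ≥ 0) → a ∈ A x)
    (hBmax : ∀ x a, (∀ y b, b ∈ B y → ⟪x - y, a - b⟫_ℝ ≥ 0) → a ∈ B x)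
    (T : H → H) (β : ℝ) (hβ : 0 < β)
    (hT : ∀ x y : H, ⟪x - y, T x - T y⟫_ℝ ≥ β * ‖T x - T y‖ ^ 2)
    (γ : ℝ) (hγ : 0 < γ)
    (JA JB : H → H)
    (hJA : ∀ x u, JA x = u ↔ x - u ∈ γ • A u)
    (hJB : ∀ x u, JB x = u ↔ x - u ∈ γ • B u) :
    {x : H | JB ((2 : ℝ) • JA x - x - γ • T (JA x)) + x - JA x = x} =
    {z : H | ∃ u y : H, (∃ a ∈ A u, ∃ b ∈ B u, a + b + T u = 0) ∧
        y ∈ A u ∧ (-y - T u) ∈ B u ∧ z = u + γ • y} := by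
  have hγ0 : γ ≠ 0 := hγ.ne'
  ext x
  simp only [Set.mem_setOf_eq]
  constructor
  · intro hx
    set u := JA x with hu
    have hAu : x - u ∈ γ • A u := (hJA x u).mp rfl
    obtain ⟨y, hyA, hxy⟩ := hAu
    have hxz : x = u + γ • y := eq_add_of_sub_eq' hxy.symm
    have hfix : JB ((2 : ℝ) • u - x - γ • T u) = u := by
      have h : JB ((2 : ℝ) • u - x - γ • T u) - u = 0 := by
        rw [show JB ((2 : ℝ) • u - x - γ • T u) - u
            = (JB ((2 : ℝ) • u - x - γ • T u) + x - u) - x by abel, hx, sub_self]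
      exact sub_eq_zero.mp h
    have hBu : ((2 : ℝ) • u - x - γ • T u) - u ∈ γ • B u := (hJB _ u).mp hfix
    have key : (-y - T u) ∈ B u := by
      have heq : ((2 : ℝ) • u - x - γ • T u) - u = γ • (-y - T u) := by
        rw [hxz]; rw [smul_sub, smul_neg]
        module
      rw [heq] at hBu
      rwa [Set.smul_mem_smul_set_iff₀ hγ0] at hBu
    exact ⟨u, y, ⟨y, hyA, -y - T u, key, by abel⟩, hyA, key, hxz⟩
  · rintro ⟨u, y, -, hyA, hBu, rfl⟩
    have hJAz : JA (u + γ • y) = u := by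
      rw [hJA]
      have : u + γ • y - u = γ • y := by abel
      rw [this]
      exact Set.smul_mem_smul_set hyA
    rw [hJAz]
    have hJBz : JB ((2 : ℝ) • u - (u + γ • y) - γ • T u) = u := by
      rw [hJB]
      have : (2 : ℝ) • u - (u + γ • y) - γ • T u - u = γ • (-y - T u) := by
        rw [smul_sub, smul_neg]; module
      rw [this]
      exact Set.smul_mem_smul_set hBu
    rw [hJBz]; abel
end

section
/- Let A, B : H ⇉ H be monotone with single-valued full-domain resolvents, T : H → H β-cocoercive, γ ∈ (0, 4β), and λ ∈ (0, 2 − γ/(2β)]. For x ∈ H set u = J_{γA}(x), v = J_{γB}(2u − x − γT(u)), x⁺ = x + λ(v − u). If x̄ ∈ Ω_γ (i.e., J_{γA}(x̄) = J_{γB}(2J_{γA}(x̄) − x̄ − γT(J_{γA}(x̄)))), then ‖x⁺ − x̄‖² + λ(2 − γ/(2β) − λ)‖v − u‖² ≤ ‖x − x̄‖². In particular ‖x⁺ − x̄‖ ≤ ‖x − x̄‖. -/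
open scoped InnerProductSpace Pointwise

set_option maxHeartbeats 1000000 in
theorem stmt6 {H : Type*} [NormedAddCommGroup H] [InnerProductSpace ℝ H]
    (A B : H → Set H)
    (hA : ∀ x y a b, a ∈ A x → b ∈ A y → ⟪x - y, a - b⟫_ℝ ≥ 0)
    (hB : ∀ x y a b, a ∈ B x → b ∈ B y → ⟪x - y, a - b⟫_ℝ ≥ 0)
    (T : H → H) (β : ℝ) (hβ : 0 < β)
    (hT : ∀ x y : H, ⟪x - y, T x - T y⟫_ℝ ≥ β * ‖T x - T y‖ ^ 2)
    (γ : ℝ) (hγ0 : 0 < γ) (hγ4 : γ < 4 * β)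
    (lam : ℝ) (hlam0 : 0 < lam) (hlam1 : lam ≤ 2 - γ / (2 * β))
    (JA JB : H → H)
    (hJA : ∀ x u, JA x = u ↔ x - u ∈ γ • A u)
    (hJB : ∀ x u, JB x = u ↔ x - u ∈ γ • B u)
    (x xb : H)
    (hxb : JA xb = JB ((2 : ℝ) • JA xb - xb - γ • T (JA xb)))
    (u v xp : H)
    (hu : u = JA x) (hv : v = JB ((2 : ℝ) • u - x - γ • T u))
    (hxp : xp = x + lam • (v - u)) :
    ‖xp - xb‖ ^ 2 + lam * (2 - γ / (2 * β) - lam) * ‖v - u‖ ^ 2 ≤ ‖x - xb‖ ^ 2 ∧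
    ‖xp - xb‖ ≤ ‖x - xb‖ := by
  set ub := JA xb with hub
  set y := (2 : ℝ) • u - x - γ • T u with hy
  set yb := (2 : ℝ) • ub - xb - γ • T ub with hyb
  -- resolvent memberships
  have hmA1 : x - u ∈ γ • A u := (hJA x u).mp hu.symm
  have hmA2 : xb - ub ∈ γ • A ub := (hJA xb ub).mp rfl
  have hmB1 : y - v ∈ γ • B v := (hJB y v).mp hv.symm
  have hmB2 : yb - ub ∈ γ • B ub := (hJB yb ub).mp hxb.symm
  obtain ⟨a1, ha1, haa1⟩ := Set.mem_smul_set.mp hmA1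
  obtain ⟨a2, ha2, haa2⟩ := Set.mem_smul_set.mp hmA2
  obtain ⟨b1, hb1, hbb1⟩ := Set.mem_smul_set.mp hmB1
  obtain ⟨b2, hb2, hbb2⟩ := Set.mem_smul_set.mp hmB2
  -- monotonicity inequalities
  have e1 : (0:ℝ) ≤ ⟪u - ub, (x - xb) - (u - ub)⟫_ℝ := by
    have harg : (x - xb) - (u - ub) = (x - u) - (xb - ub) := by abel
    rw [harg, ← haa1, ← haa2, ← smul_sub, real_inner_smul_right]
    exact mul_nonneg hγ0.le (hA u ub a1 a2 ha1 ha2)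
  have e2 : (0:ℝ) ≤ ⟪v - ub, (2:ℝ) • (u - ub) - (x - xb) - γ • (T u - T ub) - (v - ub)⟫_ℝ := by
    have harg : (2:ℝ) • (u - ub) - (x - xb) - γ • (T u - T ub) - (v - ub)
        = (y - v) - (yb - ub) := by
      rw [hy, hyb]; simp only [smul_sub]; abel
    rw [harg, ← hbb1, ← hbb2, ← smul_sub, real_inner_smul_right]
    exact mul_nonneg hγ0.le (hB v ub b1 b2 hb1 hb2)
  -- scalar forms
  have s1 : (0:ℝ) ≤ ⟪u - ub, x - xb⟫_ℝ - ‖u - ub‖ ^ 2 := by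
    rw [inner_sub_right, real_inner_self_eq_norm_sq] at e1; linarith
  have s2 : (0:ℝ) ≤ 2 * ⟪v - ub, u - ub⟫_ℝ - ⟪v - ub, x - xb⟫_ℝ
      - γ * ⟪v - ub, T u - T ub⟫_ℝ - ‖v - ub‖ ^ 2 := by
    rw [show ‖v - ub‖ ^ 2 = ⟪v - ub, v - ub⟫_ℝ from (real_inner_self_eq_norm_sq _).symm]
    simp only [inner_sub_right, real_inner_smul_right] at e2 ⊢
    linarith
  have s3 : β * ‖T u - T ub‖ ^ 2 ≤ ⟪u - ub, T u - T ub⟫_ℝ := hT u ub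
  have s4 : -(‖v - u‖ * ‖T u - T ub‖) ≤ ⟪v - u, T u - T ub⟫_ℝ :=
    (neg_le_neg (abs_real_inner_le_norm (v - u) (T u - T ub))).trans (neg_abs_le _)
  have s5 : ⟪v - ub, T u - T ub⟫_ℝ = ⟪v - u, T u - T ub⟫_ℝ + ⟪u - ub, T u - T ub⟫_ℝ := by
    rw [show v - ub = (v - u) + (u - ub) from by abel, inner_add_left]
  have s6 : ‖v - u‖ ^ 2 = ‖v - ub‖ ^ 2 - 2 * ⟪v - ub, u - ub⟫_ℝ + ‖u - ub‖ ^ 2 := by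
    rw [show v - u = (v - ub) - (u - ub) from by abel, @norm_sub_sq_real]
  have s7 : ⟪x - xb, v - u⟫_ℝ = ⟪v - ub, x - xb⟫_ℝ - ⟪u - ub, x - xb⟫_ℝ := by
    rw [real_inner_comm, show v - u = (v - ub) - (u - ub) from by abel, inner_sub_left]
  have hd2 : ⟪x - xb, v - u⟫_ℝ ≤ -‖v - u‖ ^ 2 - γ * ⟪v - ub, T u - T ub⟫_ℝ := by
    linarith
  have s5γ : (4 * β * γ) * ⟪v - ub, T u - T ub⟫_ℝ
      = (4 * β * γ) * ⟪v - u, T u - T ub⟫_ℝ + (4 * β * γ) * ⟪u - ub, T u - T ub⟫_ℝ := by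
    rw [s5]; ring
  have H1 := mul_le_mul_of_nonneg_left hd2 (show (0:ℝ) ≤ 4 * β by linarith)
  have H2 := mul_le_mul_of_nonneg_left s3 (show (0:ℝ) ≤ 4 * β * γ by positivity)
  have H3 := mul_le_mul_of_nonneg_left s4 (show (0:ℝ) ≤ 4 * β * γ by positivity)
  have H4 : (0:ℝ) ≤ γ * (2 * β * ‖T u - T ub‖ - ‖v - u‖) ^ 2 :=
    mul_nonneg hγ0.le (sq_nonneg _)
  have key4 : 4 * β * ⟪x - xb, v - u⟫_ℝ + (4 * β - γ) * ‖v - u‖ ^ 2 ≤ 0 := by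
    nlinarith [H1, H2, H3, H4, s5γ]
  have h2β : (0:ℝ) < 2 * β := by linarith
  have key : 2 * ⟪x - xb, v - u⟫_ℝ + (2 - γ / (2 * β)) * ‖v - u‖ ^ 2 ≤ 0 := by
    have heq : 2 * ⟪x - xb, v - u⟫_ℝ + (2 - γ / (2 * β)) * ‖v - u‖ ^ 2
        = (4 * β * ⟪x - xb, v - u⟫_ℝ + (4 * β - γ) * ‖v - u‖ ^ 2) / (2 * β) := by
      field_simp; ring
    rw [heq]
    exact div_nonpos_of_nonpos_of_nonneg key4 h2β.le
  have hxpd : xp - xb = (x - xb) + lam • (v - u) := by rw [hxp]; abel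
  have hnorm : ‖xp - xb‖ ^ 2
      = ‖x - xb‖ ^ 2 + 2 * lam * ⟪x - xb, v - u⟫_ℝ + lam ^ 2 * ‖v - u‖ ^ 2 := by
    rw [hxpd, @norm_add_sq_real, real_inner_smul_right, norm_smul, Real.norm_eq_abs,
      abs_of_pos hlam0]
    ring
  have hk := mul_le_mul_of_nonneg_left key hlam0.le
  have g1 : ‖xp - xb‖ ^ 2 + lam * (2 - γ / (2 * β) - lam) * ‖v - u‖ ^ 2 ≤ ‖x - xb‖ ^ 2 := by
    rw [hnorm]; linarith [hk]
  refine ⟨g1, ?_⟩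
  have hWterm : (0:ℝ) ≤ lam * (2 - γ / (2 * β) - lam) * ‖v - u‖ ^ 2 :=
    mul_nonneg (mul_nonneg hlam0.le (by linarith)) (sq_nonneg _)
  have hsq : ‖xp - xb‖ ^ 2 ≤ ‖x - xb‖ ^ 2 := by linarith
  nlinarith [norm_nonneg (xp - xb), norm_nonneg (x - xb), hsq]
end

section
/- Under the assumptions of the Davis–Yin iteration (A, B monotone with single-valued full-domain resolvents, T β-cocoercive, γ ∈ (0,4β), λ_k ∈ (0, 2 − γ/(2β)]), the sequence w_k := v_k − u_k of the iteration u_k = J_{γA}(x_k), v_k = J_{γB}(2u_k − x_k − γT(u_k)), x_{k+1} = x_k + λ_k(v_k − u_k) satisfies λ_k‖w_{k+1}‖² ≤ λ_k‖w_k‖² − (2 − γ/(2β) − λ_k)‖w_{k+1} − w_k‖²; in particular (‖w_k‖)_{k∈ℕ} is nonincreasing. -/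
open scoped InnerProductSpace Pointwise

theorem stmt7 {H : Type*} [NormedAddCommGroup H] [InnerProductSpace ℝ H]
    (A B : H → Set H)
    (hA : ∀ x y a b, a ∈ A x → b ∈ A y → ⟪x - y, a - b⟫_ℝ ≥ 0)
    (hB : ∀ x y a b, a ∈ B x → b ∈ B y → ⟪x - y, a - b⟫_ℝ ≥ 0)
    (T : H → H) (β : ℝ) (hβ : 0 < β)
    (hT : ∀ x y : H, ⟪x - y, T x - T y⟫_ℝ ≥ β * ‖T x - T y‖ ^ 2)
    (γ : ℝ) (hγ0 : 0 < γ) (hγ4 : γ < 4 * β)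
    (lam : ℕ → ℝ) (hlam : ∀ k, 0 < lam k ∧ lam k ≤ 2 - γ / (2 * β))
    (JA JB : H → H)
    (hJA : ∀ x u, JA x = u ↔ x - u ∈ γ • A u)
    (hJB : ∀ x u, JB x = u ↔ x - u ∈ γ • B u)
    (x u v : ℕ → H)
    (hu : ∀ k, u k = JA (x k))
    (hv : ∀ k, v k = JB ((2 : ℝ) • u k - x k - γ • T (u k)))
    (hx : ∀ k, x (k + 1) = x k + lam k • (v k - u k)) :
    (∀ k, lam k * ‖v (k + 1) - u (k + 1)‖ ^ 2 ≤
        lam k * ‖v k - u k‖ ^ 2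
          - (2 - γ / (2 * β) - lam k) * ‖(v (k + 1) - u (k + 1)) - (v k - u k)‖ ^ 2) ∧
    (∀ k, ‖v (k + 1) - u (k + 1)‖ ≤ ‖v k - u k‖) := by
  have hAm : ∀ k, ∃ a, a ∈ A (u k) ∧ γ • a = x k - u k := by
    intro k
    have h := (hJA (x k) (u k)).mp (hu k).symm
    rcases Set.mem_smul_set.mp h with ⟨a, ha, haeq⟩
    exact ⟨a, ha, haeq⟩
  have hBm : ∀ k, ∃ b, b ∈ B (v k) ∧
      γ • b = ((2 : ℝ) • u k - x k - γ • T (u k)) - v k := by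
    intro k
    have h := (hJB ((2 : ℝ) • u k - x k - γ • T (u k)) (v k)).mp (hv k).symm
    rcases Set.mem_smul_set.mp h with ⟨b, hb, hbeq⟩
    exact ⟨b, hb, hbeq⟩
  choose a ha haeq using hAm
  choose b hb hbeq using hBm
  have main : ∀ k, lam k * ‖v (k + 1) - u (k + 1)‖ ^ 2 ≤
      lam k * ‖v k - u k‖ ^ 2
        - (2 - γ / (2 * β) - lam k) * ‖(v (k + 1) - u (k + 1)) - (v k - u k)‖ ^ 2 := by
    intro k
    have hβ' : (β : ℝ) ≠ 0 := ne_of_gt hβ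
    -- abbreviations (plain terms, no `set`, for defeq safety)
    have hA1 : (x (k+1) - x k) - (u (k+1) - u k) = γ • (a (k+1) - a k) := by
      rw [smul_sub, haeq, haeq]; abel
    have hA' : (0:ℝ) ≤ ⟪u (k+1) - u k, (x (k+1) - x k) - (u (k+1) - u k)⟫_ℝ := by
      rw [hA1, real_inner_smul_right]
      exact mul_nonneg hγ0.le (hA _ _ _ _ (ha (k+1)) (ha k))
    have hB1 : ((2:ℝ) • (u (k+1) - u k) - (x (k+1) - x k)
          - γ • (T (u (k+1)) - T (u k))) - (v (k+1) - v k)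
        = γ • (b (k+1) - b k) := by
      rw [smul_sub γ (b (k+1)) (b k), hbeq, hbeq]; module
    have hB' : (0:ℝ) ≤ ⟪v (k+1) - v k, ((2:ℝ) • (u (k+1) - u k) - (x (k+1) - x k)
          - γ • (T (u (k+1)) - T (u k))) - (v (k+1) - v k)⟫_ℝ := by
      rw [hB1, real_inner_smul_right]
      exact mul_nonneg hγ0.le (hB _ _ _ _ (hb (k+1)) (hb k))
    have hT' : ⟪u (k+1) - u k, T (u (k+1)) - T (u k)⟫_ℝ
        ≥ β * ‖T (u (k+1)) - T (u k)‖ ^ 2 := hT _ _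
    -- Cauchy-Schwarz
    have hCS : -(‖(v (k+1) - v k) - (u (k+1) - u k)‖ * ‖T (u (k+1)) - T (u k)‖)
        ≤ ⟪(v (k+1) - v k) - (u (k+1) - u k), T (u (k+1)) - T (u k)⟫_ℝ := by
      have h1 := abs_real_inner_le_norm ((v (k+1) - v k) - (u (k+1) - u k))
        (T (u (k+1)) - T (u k))
      have h2 := neg_abs_le (⟪(v (k+1) - v k) - (u (k+1) - u k),
        T (u (k+1)) - T (u k)⟫_ℝ)
      linarith
    have hsplit : ⟪v (k+1) - v k, T (u (k+1)) - T (u k)⟫_ℝ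
        = ⟪u (k+1) - u k, T (u (k+1)) - T (u k)⟫_ℝ
          + ⟪(v (k+1) - v k) - (u (k+1) - u k), T (u (k+1)) - T (u k)⟫_ℝ := by
      simp only [inner_sub_left]; ring
    -- lower bound for γ * ⟪Δv, δ⟫
    have hTV : -(γ / (4 * β)) * ‖(v (k+1) - v k) - (u (k+1) - u k)‖ ^ 2
        ≤ γ * ⟪v (k+1) - v k, T (u (k+1)) - T (u k)⟫_ℝ := by
      rw [hsplit]
      have hkey : 0 ≤ (γ / (4 * β)) *
          (2 * β * ‖T (u (k+1)) - T (u k)‖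
            - ‖(v (k+1) - v k) - (u (k+1) - u k)‖) ^ 2 := by positivity
      have hexp : (γ / (4 * β)) *
          (2 * β * ‖T (u (k+1)) - T (u k)‖
            - ‖(v (k+1) - v k) - (u (k+1) - u k)‖) ^ 2
          = γ * β * ‖T (u (k+1)) - T (u k)‖ ^ 2
            - γ * (‖(v (k+1) - v k) - (u (k+1) - u k)‖ * ‖T (u (k+1)) - T (u k)‖)
            + (γ / (4 * β)) * ‖(v (k+1) - v k) - (u (k+1) - u k)‖ ^ 2 := by
        field_simp
        ring
      nlinarith [mul_le_mul_of_nonneg_left hCS hγ0.le,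
        mul_le_mul_of_nonneg_left hT'.le hγ0.le]
    -- algebraic identity combining the monotonicity inner products
    have hid : ⟪u (k+1) - u k, (x (k+1) - x k) - (u (k+1) - u k)⟫_ℝ
        + ⟪v (k+1) - v k, ((2:ℝ) • (u (k+1) - u k) - (x (k+1) - x k)
            - γ • (T (u (k+1)) - T (u k))) - (v (k+1) - v k)⟫_ℝ
        = -(⟪(v (k+1) - v k) - (u (k+1) - u k), x (k+1) - x k⟫_ℝ
            + ‖(v (k+1) - v k) - (u (k+1) - u k)‖ ^ 2
            + γ * ⟪v (k+1) - v k, T (u (k+1)) - T (u k)⟫_ℝ) := by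
      simp only [inner_sub_left, inner_sub_right, real_inner_smul_right,
        norm_sub_sq_real, real_inner_self_eq_norm_sq]
      linarith [real_inner_comm (u k) (u (k+1)), real_inner_comm (v k) (v (k+1))]
    have key : ⟪(v (k+1) - v k) - (u (k+1) - u k), x (k+1) - x k⟫_ℝ
        ≤ -(1 - γ / (4 * β)) * ‖(v (k+1) - v k) - (u (k+1) - u k)‖ ^ 2 := by
      nlinarith [hA', hB', hTV, hid]
    -- rewrite the inner product using the update rule
    have hxk : x (k+1) - x k = lam k • (v k - u k) := by rw [hx k]; abel
    have key2 : lam k * ⟪v k - u k, ((v (k+1) - u (k+1)) - (v k - u k))⟫_ℝ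
        ≤ -(1 - γ / (4 * β)) * ‖(v (k+1) - u (k+1)) - (v k - u k)‖ ^ 2 := by
      have hw : (v (k+1) - v k) - (u (k+1) - u k)
          = (v (k+1) - u (k+1)) - (v k - u k) := by abel
      have h3 : ⟪(v (k+1) - v k) - (u (k+1) - u k), x (k+1) - x k⟫_ℝ
          = lam k * ⟪v k - u k, ((v (k+1) - u (k+1)) - (v k - u k))⟫_ℝ := by
        rw [hxk, real_inner_smul_right, hw, real_inner_comm]
      rw [← h3, ← hw]
      exact key
    have hnorm : ‖v (k+1) - u (k+1)‖ ^ 2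
        = ‖v k - u k‖ ^ 2
          + 2 * ⟪v k - u k, ((v (k+1) - u (k+1)) - (v k - u k))⟫_ℝ
          + ‖(v (k+1) - u (k+1)) - (v k - u k)‖ ^ 2 := by
      have h4 := norm_add_sq_real (v k - u k)
        ((v (k+1) - u (k+1)) - (v k - u k))
      have h5 : (v k - u k) + ((v (k+1) - u (k+1)) - (v k - u k))
          = v (k+1) - u (k+1) := by abel
      rw [h5] at h4
      linarith
    have hc : γ / (2 * β) = 2 * (γ / (4 * β)) := by
      field_simp
      ring
    rw [hnorm, hc]
    linarith [key2]
  refine ⟨main, fun k => ?_⟩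
  have h1 := main k
  have hl := hlam k
  have h2 : ‖v (k+1) - u (k+1)‖ ^ 2 ≤ ‖v k - u k‖ ^ 2 := by
    nlinarith [sq_nonneg ‖(v (k + 1) - u (k + 1)) - (v k - u k)‖, hl.1, hl.2, h1]
  nlinarith [norm_nonneg (v (k+1) - u (k+1)), norm_nonneg (v k - u k), h2]
end

section
/- Let A, B : H ⇉ H be maximally monotone, T : H → H β-cocoercive with β > 0 and zer(A+B+T) ≠ ∅. Let γ ∈ (0, 4β), (λ_k) ⊂ (0, 2 − γ/(2β)] with Σ_k λ_k(2 − γ/(2β) − λ_k) = +∞, and let x_0 ∈ H. Define u_k = J_{γA}(x_k), v_k = J_{γB}(2u_k − x_k − γT(u_k)), x_{k+1} = x_k + λ_k(v_k − u_k). Then v_k − u_k → 0 strongly. -/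
open Filter Topology
open scoped InnerProductSpace Pointwise

lemma dys_inner_key {H : Type*} [NormedAddCommGroup H] [InnerProductSpace ℝ H]
    (P Q D W : H) (β γ : ℝ) (hβ : 0 < β) (hγ : 0 < γ)
    (h1 : ⟪P, D - P⟫_ℝ ≥ 0)
    (h2 : ⟪Q, (2:ℝ) • P - D - γ • W - Q⟫_ℝ ≥ 0)
    (h3 : ⟪P, W⟫_ℝ ≥ β * ‖W‖ ^ 2) :
    4 * β * ⟪D, Q - P⟫_ℝ ≤ -(4 * β - γ) * ‖Q - P‖ ^ 2 := by
  simp only [inner_sub_right, real_inner_smul_right] at h1 h2 ⊢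
  have e3 : ‖Q - P‖ ^ 2 = ⟪Q, Q⟫_ℝ - 2 * ⟪Q, P⟫_ℝ + ⟪P, P⟫_ℝ := by
    rw [← real_inner_self_eq_norm_sq]
    simp only [inner_sub_left, inner_sub_right]
    rw [real_inner_comm P Q]; ring
  have e4 : ⟪D, Q⟫_ℝ = ⟪Q, D⟫_ℝ := real_inner_comm _ _
  have e5 : ⟪D, P⟫_ℝ = ⟪P, D⟫_ℝ := real_inner_comm _ _
  have hy : ⟪P, W⟫_ℝ - ⟪Q, W⟫_ℝ ≤ ‖Q - P‖ * ‖W‖ := by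
    have h := real_inner_le_norm (P - Q) W
    rw [norm_sub_rev] at h
    simpa only [inner_sub_left] using h
  have h12 : ‖Q - P‖ ^ 2 + γ * ⟪Q, W⟫_ℝ ≤ ⟪P, D⟫_ℝ - ⟪Q, D⟫_ℝ := by
    rw [e3]; linarith
  have step1 : 4 * β * (⟪P, W⟫_ℝ - ⟪Q, W⟫_ℝ) ≤ 4 * β * (‖Q - P‖ * ‖W‖) :=
    mul_le_mul_of_nonneg_left hy (by positivity)
  have step2 : 4 * β * (β * ‖W‖ ^ 2) ≤ 4 * β * ⟪P, W⟫_ℝ :=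
    mul_le_mul_of_nonneg_left h3 (by positivity)
  have step3 : 4 * β * (‖Q - P‖ * ‖W‖) ≤ 4 * β ^ 2 * ‖W‖ ^ 2 + ‖Q - P‖ ^ 2 := by
    nlinarith [sq_nonneg (2 * β * ‖W‖ - ‖Q - P‖)]
  have hQW : -(‖Q - P‖ ^ 2) ≤ 4 * β * ⟪Q, W⟫_ℝ := by nlinarith
  have h12b : 4 * β * (‖Q - P‖ ^ 2 + γ * ⟪Q, W⟫_ℝ) ≤ 4 * β * (⟪P, D⟫_ℝ - ⟪Q, D⟫_ℝ) :=
    mul_le_mul_of_nonneg_left h12 (by positivity)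
  have hQWg : γ * (-(‖Q - P‖ ^ 2)) ≤ γ * (4 * β * ⟪Q, W⟫_ℝ) :=
    mul_le_mul_of_nonneg_left hQW hγ.le
  rw [e4, e5]
  nlinarith [h12b, hQWg]

theorem stmt8 {H : Type*} [NormedAddCommGroup H] [InnerProductSpace ℝ H] [CompleteSpace H]
    (A B : H → Set H)
    (hA : ∀ x y a b, a ∈ A x → b ∈ A y → ⟪x - y, a - b⟫_ℝ ≥ 0)
    (hB : ∀ x y a b, a ∈ B x → b ∈ B y → ⟪x - y, a - b⟫_ℝ ≥ 0)
    (hAmax : ∀ x a, (∀ y b, b ∈ A y → ⟪x - y, a - b⟫_ℝ ≥ 0) → a ∈ A x)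
    (hBmax : ∀ x a, (∀ y b, b ∈ B y → ⟪x - y, a - b⟫_ℝ ≥ 0) → a ∈ B x)
    (T : H → H) (β : ℝ) (hβ : 0 < β)
    (hT : ∀ x y : H, ⟪x - y, T x - T y⟫_ℝ ≥ β * ‖T x - T y‖ ^ 2)
    (hzer : ∃ z : H, ∃ a ∈ A z, ∃ b ∈ B z, a + b + T z = 0)
    (γ : ℝ) (hγ0 : 0 < γ) (hγ4 : γ < 4 * β)
    (lam : ℕ → ℝ) (hlam : ∀ k, 0 < lam k ∧ lam k ≤ 2 - γ / (2 * β))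
    (hdiv : Tendsto (fun n => ∑ k ∈ Finset.range n,
        lam k * (2 - γ / (2 * β) - lam k)) atTop atTop)
    (JA JB : H → H)
    (hJA : ∀ x u, JA x = u ↔ x - u ∈ γ • A u)
    (hJB : ∀ x u, JB x = u ↔ x - u ∈ γ • B u)
    (x u v : ℕ → H)
    (hu : ∀ k, u k = JA (x k))
    (hv : ∀ k, v k = JB ((2 : ℝ) • u k - x k - γ • T (u k)))
    (hx : ∀ k, x (k + 1) = x k + lam k • (v k - u k)) :
    Tendsto (fun k => v k - u k) atTop (nhds 0) := by
  obtain ⟨z, a, haz, b, hbz, hzero⟩ := hzer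
  set ε : ℝ := 2 - γ / (2 * β) with hεdef
  have hεβ : 2 * β * ε = 4 * β - γ := by
    rw [hεdef]; field_simp; ring
  -- memberships along the iteration
  have hAk : ∀ k, x k - u k ∈ γ • A (u k) := fun k => (hJA (x k) (u k)).mp (hu k).symm
  have hBk : ∀ k, ((2:ℝ) • u k - x k - γ • T (u k)) - v k ∈ γ • B (v k) :=
    fun k => (hJB _ (v k)).mp (hv k).symm
  -- fixed point
  set xb : H := z + γ • a with hxb
  have hAz : xb - z ∈ γ • A z := by
    have e : xb - z = γ • a := by rw [hxb]; abel
    rw [e]; exact Set.smul_mem_smul_set haz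
  have hBz : ((2:ℝ) • z - xb - γ • T z) - z ∈ γ • B z := by
    have e : ((2:ℝ) • z - xb - γ • T z) - z = γ • b := by
      rw [hxb]
      have hb' : γ • b = γ • (0 : H) - γ • a - γ • T z := by
        rw [← hzero]; rw [smul_add, smul_add]; abel
      rw [hb']
      simp only [smul_zero]
      module
    rw [e]; exact Set.smul_mem_smul_set hbz
  -- general two-point inequality
  have key : ∀ x₁ u₁ v₁ x₂ u₂ v₂ : H,
      x₁ - u₁ ∈ γ • A u₁ → x₂ - u₂ ∈ γ • A u₂ →
      ((2:ℝ) • u₁ - x₁ - γ • T u₁) - v₁ ∈ γ • B v₁ →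
      ((2:ℝ) • u₂ - x₂ - γ • T u₂) - v₂ ∈ γ • B v₂ →
      4 * β * ⟪x₁ - x₂, (v₁ - u₁) - (v₂ - u₂)⟫_ℝ
        ≤ -(4 * β - γ) * ‖(v₁ - u₁) - (v₂ - u₂)‖ ^ 2 := by
    intro x₁ u₁ v₁ x₂ u₂ v₂ hA1 hA2 hB1 hB2
    obtain ⟨a₁, ha₁, hae₁⟩ := Set.mem_smul_set.mp hA1
    obtain ⟨a₂, ha₂, hae₂⟩ := Set.mem_smul_set.mp hA2
    obtain ⟨b₁, hb₁, hbe₁⟩ := Set.mem_smul_set.mp hB1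
    obtain ⟨b₂, hb₂, hbe₂⟩ := Set.mem_smul_set.mp hB2
    have erw : (v₁ - u₁) - (v₂ - u₂) = (v₁ - v₂) - (u₁ - u₂) := by abel
    rw [erw]
    apply dys_inner_key (u₁ - u₂) (v₁ - v₂) (x₁ - x₂) (T u₁ - T u₂) β γ hβ hγ0
    · have e : (x₁ - x₂) - (u₁ - u₂) = γ • (a₁ - a₂) := by
        rw [smul_sub, hae₁, hae₂]; abel
      rw [e, real_inner_smul_right]
      exact mul_nonneg hγ0.le (hA u₁ u₂ a₁ a₂ ha₁ ha₂)
    · have e : (2:ℝ) • (u₁ - u₂) - (x₁ - x₂) - γ • (T u₁ - T u₂) - (v₁ - v₂)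
          = γ • (b₁ - b₂) := by
        rw [smul_sub γ b₁ b₂, hbe₁, hbe₂]; module
      rw [e, real_inner_smul_right]
      exact mul_nonneg hγ0.le (hB v₁ v₂ b₁ b₂ hb₁ hb₂)
    · exact hT u₁ u₂
  -- inequality against the fixed point
  have key1 : ∀ k, 4 * β * ⟪x k - xb, v k - u k⟫_ℝ ≤ -(4 * β - γ) * ‖v k - u k‖ ^ 2 := by
    intro k
    have h := key (x k) (u k) (v k) xb z z (hAk k) hAz (hBk k) hBz
    simpa using h
  -- Fejér monotonicity
  have fe : ∀ k, ‖x (k + 1) - xb‖ ^ 2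
      ≤ ‖x k - xb‖ ^ 2 - lam k * (ε - lam k) * ‖v k - u k‖ ^ 2 := by
    intro k
    have hx' : x (k + 1) - xb = (x k - xb) + lam k • (v k - u k) := by
      rw [hx k]; abel
    rw [hx', norm_add_sq_real, real_inner_smul_right, norm_smul]
    have habs : |lam k| = lam k := abs_of_pos (hlam k).1
    rw [Real.norm_eq_abs, habs, mul_pow]
    have h2i : 2 * ⟪x k - xb, v k - u k⟫_ℝ ≤ -ε * ‖v k - u k‖ ^ 2 := by
      nlinarith [key1 k, hβ, hεβ]
    nlinarith [mul_le_mul_of_nonneg_left h2i (hlam k).1.le, (hlam k).1, sq_nonneg ‖v k - u k‖]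
  -- residual norms are nonincreasing
  have mono : ∀ k, ‖v (k + 1) - u (k + 1)‖ ^ 2 ≤ ‖v k - u k‖ ^ 2 := by
    intro k
    have hk := key (x (k + 1)) (u (k + 1)) (v (k + 1)) (x k) (u k) (v k)
      (hAk (k + 1)) (hAk k) (hBk (k + 1)) (hBk k)
    have hxd : x (k + 1) - x k = lam k • (v k - u k) := by rw [hx k]; abel
    rw [hxd, real_inner_smul_left] at hk
    have expand : ‖v (k + 1) - u (k + 1)‖ ^ 2
        = ‖v k - u k‖ ^ 2 + 2 * ⟪v k - u k, (v (k + 1) - u (k + 1)) - (v k - u k)⟫_ℝ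
          + ‖(v (k + 1) - u (k + 1)) - (v k - u k)‖ ^ 2 := by
      have e : v (k + 1) - u (k + 1)
          = (v k - u k) + ((v (k + 1) - u (k + 1)) - (v k - u k)) := by abel
      rw [e, norm_add_sq_real]
      abel_nf
    have h1 : 2 * β * lam k * (‖v (k + 1) - u (k + 1)‖ ^ 2 - ‖v k - u k‖ ^ 2)
        ≤ -(2 * β) * (ε - lam k) * ‖(v (k + 1) - u (k + 1)) - (v k - u k)‖ ^ 2 := by
      have heε2 : 2 * β * ε * ‖(v (k + 1) - u (k + 1)) - (v k - u k)‖ ^ 2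
          = (4 * β - γ) * ‖(v (k + 1) - u (k + 1)) - (v k - u k)‖ ^ 2 := by
        linear_combination ‖(v (k + 1) - u (k + 1)) - (v k - u k)‖ ^ 2 * hεβ
      rw [expand]
      nlinarith [hk, heε2]
    have h2 : -(2 * β) * (ε - lam k) * ‖(v (k + 1) - u (k + 1)) - (v k - u k)‖ ^ 2 ≤ 0 := by
      have hnn : 0 ≤ (ε - lam k) := sub_nonneg.mpr (hlam k).2
      nlinarith [sq_nonneg ‖(v (k + 1) - u (k + 1)) - (v k - u k)‖, hβ, hnn,
        mul_nonneg (mul_nonneg hβ.le hnn) (sq_nonneg ‖(v (k + 1) - u (k + 1)) - (v k - u k)‖)]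
    nlinarith [h1, h2, mul_pos hβ (hlam k).1]
  have monoLe : ∀ j k, j ≤ k → ‖v k - u k‖ ^ 2 ≤ ‖v j - u j‖ ^ 2 := by
    intro j k hjk
    induction k, hjk using Nat.le_induction with
    | base => exact le_refl _
    | succ n hn ih => exact le_trans (mono n) ih
  -- summability bound
  have sum_bound : ∀ n, (∑ k ∈ Finset.range n, lam k * (ε - lam k) * ‖v k - u k‖ ^ 2)
      + ‖x n - xb‖ ^ 2 ≤ ‖x 0 - xb‖ ^ 2 := by
    intro n
    induction n with
    | zero => simp
    | succ n ih =>
      rw [Finset.sum_range_succ]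
      have := fe n
      linarith
  -- conclude
  rw [NormedAddCommGroup.tendsto_nhds_zero]
  intro δ hδ
  have hexN : ∃ N, ‖v N - u N‖ < δ := by
    by_contra hcon
    push_neg at hcon
    have hterm : ∀ n, δ ^ 2 * (∑ k ∈ Finset.range n, lam k * (ε - lam k))
        ≤ ‖x 0 - xb‖ ^ 2 := by
      intro n
      have h1 : δ ^ 2 * (∑ k ∈ Finset.range n, lam k * (ε - lam k))
          ≤ ∑ k ∈ Finset.range n, lam k * (ε - lam k) * ‖v k - u k‖ ^ 2 := by
        rw [Finset.mul_sum]
        apply Finset.sum_le_sum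
        intro k _
        have hnn : 0 ≤ lam k * (ε - lam k) :=
          mul_nonneg (hlam k).1.le (sub_nonneg.mpr (hlam k).2)
        have hδ2 : δ ^ 2 ≤ ‖v k - u k‖ ^ 2 :=
          pow_le_pow_left₀ hδ.le (hcon k) 2
        calc δ ^ 2 * (lam k * (ε - lam k)) ≤ ‖v k - u k‖ ^ 2 * (lam k * (ε - lam k)) :=
              mul_le_mul_of_nonneg_right hδ2 hnn
          _ = lam k * (ε - lam k) * ‖v k - u k‖ ^ 2 := by ring
      have h2 := sum_bound n
      have h3 : (0:ℝ) ≤ ‖x n - xb‖ ^ 2 := sq_nonneg _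
      linarith
    obtain ⟨n, hn⟩ := (hdiv.eventually_gt_atTop (‖x 0 - xb‖ ^ 2 / δ ^ 2)).exists
    have hδ2 : (0:ℝ) < δ ^ 2 := by positivity
    have := hterm n
    rw [div_lt_iff₀ hδ2] at hn
    nlinarith [hn, this]
  obtain ⟨N, hN⟩ := hexN
  filter_upwards [eventually_ge_atTop N] with k hk
  have h1 : ‖v k - u k‖ ^ 2 ≤ ‖v N - u N‖ ^ 2 := monoLe N k hk
  have h2 : ‖v N - u N‖ ^ 2 < δ ^ 2 := by
    have := norm_nonneg (v N - u N)
    nlinarith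
  nlinarith [norm_nonneg (v k - u k), hδ]
end

section
/- Let A, B : H ⇉ H be maximally monotone, T : H → H β-cocoercive with zer(A+B+T) ≠ ∅, γ ∈ (0,4β), (λ_k) ⊂ (0, 2 − γ/(2β)] with Σ_k λ_k(2 − γ/(2β) − λ_k) = +∞. Then the Davis–Yin iterates x_{k+1} = x_k + λ_k(J_{γB}(2J_{γA}x_k − x_k − γT(J_{γA}x_k)) − J_{γA}x_k) converge weakly to a point x̄ ∈ Ω_γ, and u_k := J_{γA}(x_k) converges weakly to ū := J_{γA}(x̄) ∈ zer(A+B+T), with T(u_k) → T(ū) strongly. -/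
open Filter Topology
open scoped InnerProductSpace Pointwise

lemma aux_weak_cluster {H : Type*} [NormedAddCommGroup H] [InnerProductSpace ℝ H] [CompleteSpace H]
    (w : ℕ → H) (M : ℝ) (hb : ∀ k, ‖w k‖ ≤ M) (G : Ultrafilter ℕ) :
    ∃ p : H, ∀ y : H, Tendsto (fun k => ⟪w k, y⟫_ℝ) G (𝓝 ⟪p, y⟫_ℝ) := by
  set D : ℕ → WeakDual ℝ H := fun k =>
    StrongDual.toWeakDual (InnerProductSpace.toDual ℝ H (w k)) with hD
  have hcomp : IsCompact (WeakDual.toStrongDual ⁻¹' Metric.closedBall 0 M) :=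
    WeakDual.isCompact_closedBall (𝕜 := ℝ) (E := H) 0 M
  have hmem : ∀ k, D k ∈ (WeakDual.toStrongDual ⁻¹' Metric.closedBall 0 M) := by
    intro k
    show WeakDual.toStrongDual (D k) ∈ Metric.closedBall 0 M
    rw [Metric.mem_closedBall, dist_zero_right]
    have h1 : WeakDual.toStrongDual (D k) = InnerProductSpace.toDual ℝ H (w k) := rfl
    rw [h1]
    have : ‖(InnerProductSpace.toDual ℝ H (w k))‖ = ‖w k‖ := by simp
    rw [this]; exact hb k
  have hle : (↑(Ultrafilter.map D G) : Filter (WeakDual ℝ H)) ≤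
      𝓟 (WeakDual.toStrongDual ⁻¹' Metric.closedBall 0 M) := by
    rw [Ultrafilter.coe_map, Filter.le_principal_iff, Filter.mem_map]
    exact Filter.univ_mem' hmem
  obtain ⟨f, _, hf⟩ := hcomp.ultrafilter_le_nhds (Ultrafilter.map D G) hle
  refine ⟨(InnerProductSpace.toDual ℝ H).symm (WeakDual.toStrongDual f), fun y => ?_⟩
  have h1 : Tendsto (fun k => (D k) y) (↑G) (𝓝 (f y)) :=
    ((WeakDual.eval_continuous y).tendsto f).comp hf
  have h2 : ∀ k, (D k) y = ⟪w k, y⟫_ℝ := by intro k; rfl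
  have h3 : f y = ⟪(InnerProductSpace.toDual ℝ H).symm (WeakDual.toStrongDual f), y⟫_ℝ := by
    simp [InnerProductSpace.toDual_apply_apply]
  rw [← h3]; simpa [h2] using h1

lemma aux_real_cluster (c : ℕ → ℝ) (M : ℝ) (hb : ∀ k, |c k| ≤ M) (G : Ultrafilter ℕ) :
    ∃ t : ℝ, Tendsto c G (𝓝 t) := by
  have hcomp : IsCompact (Set.Icc (-M) M) := isCompact_Icc
  have hle : ↑(G.map c) ≤ 𝓟 (Set.Icc (-M) M) := by
    rw [Ultrafilter.coe_map, Filter.le_principal_iff, Filter.mem_map]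
    exact Filter.univ_mem' fun k => abs_le.mp (hb k)
  obtain ⟨t, _, ht⟩ := hcomp.ultrafilter_le_nhds (G.map c) hle
  exact ⟨t, ht⟩

lemma aux_inner_zero_left {H : Type*} [NormedAddCommGroup H] [InnerProductSpace ℝ H]
    {l : Filter ℕ} (f g : ℕ → H) (M : ℝ) (hf : ∀ k, ‖f k‖ ≤ M)
    (hg : Tendsto g l (𝓝 0)) : Tendsto (fun k => ⟪f k, g k⟫_ℝ) l (𝓝 0) := by
  have hM : Tendsto (fun k => M * ‖g k‖) l (𝓝 0) := by
    have := (tendsto_zero_iff_norm_tendsto_zero.mp hg).const_mul M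
    simpa using this
  refine squeeze_zero_norm (fun k => ?_) hM
  calc ‖⟪f k, g k⟫_ℝ‖ ≤ ‖f k‖ * ‖g k‖ := by
        rw [Real.norm_eq_abs]; exact abs_real_inner_le_norm _ _
    _ ≤ M * ‖g k‖ := mul_le_mul_of_nonneg_right (hf k) (norm_nonneg _)

lemma aux_inner_zero_right {H : Type*} [NormedAddCommGroup H] [InnerProductSpace ℝ H]
    {l : Filter ℕ} (f g : ℕ → H) (M : ℝ) (hf : ∀ k, ‖f k‖ ≤ M)
    (hg : Tendsto g l (𝓝 0)) : Tendsto (fun k => ⟪g k, f k⟫_ℝ) l (𝓝 0) := by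
  have := aux_inner_zero_left f g M hf hg
  simpa [real_inner_comm] using this
set_option maxHeartbeats 2000000 in
theorem stmt9 {H : Type*} [NormedAddCommGroup H] [InnerProductSpace ℝ H] [CompleteSpace H]
    (A B : H → Set H)
    (hA : ∀ x y a b, a ∈ A x → b ∈ A y → ⟪x - y, a - b⟫_ℝ ≥ 0)
    (hB : ∀ x y a b, a ∈ B x → b ∈ B y → ⟪x - y, a - b⟫_ℝ ≥ 0)
    (hAmax : ∀ x a, (∀ y b, b ∈ A y → ⟪x - y, a - b⟫_ℝ ≥ 0) → a ∈ A x)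
    (hBmax : ∀ x a, (∀ y b, b ∈ B y → ⟪x - y, a - b⟫_ℝ ≥ 0) → a ∈ B x)
    (T : H → H) (β : ℝ) (hβ : 0 < β)
    (hT : ∀ x y : H, ⟪x - y, T x - T y⟫_ℝ ≥ β * ‖T x - T y‖ ^ 2)
    (hzer : ∃ z : H, ∃ a ∈ A z, ∃ b ∈ B z, a + b + T z = 0)
    (γ : ℝ) (hγ0 : 0 < γ) (hγ4 : γ < 4 * β)
    (lam : ℕ → ℝ) (hlam : ∀ k, 0 < lam k ∧ lam k ≤ 2 - γ / (2 * β))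
    (hdiv : Tendsto (fun n => ∑ k ∈ Finset.range n,
        lam k * (2 - γ / (2 * β) - lam k)) atTop atTop)
    (JA JB : H → H)
    (hJA : ∀ x u, JA x = u ↔ x - u ∈ γ • A u)
    (hJB : ∀ x u, JB x = u ↔ x - u ∈ γ • B u)
    (x u v : ℕ → H)
    (hu : ∀ k, u k = JA (x k))
    (hv : ∀ k, v k = JB ((2 : ℝ) • u k - x k - γ • T (u k)))
    (hx : ∀ k, x (k + 1) = x k + lam k • (v k - u k)) :
    ∃ xb : H,
      (∀ y : H, Tendsto (fun k => ⟪x k, y⟫_ℝ) atTop (nhds ⟪xb, y⟫_ℝ)) ∧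
      JA xb = JB ((2 : ℝ) • JA xb - xb - γ • T (JA xb)) ∧
      (∀ y : H, Tendsto (fun k => ⟪u k, y⟫_ℝ) atTop (nhds ⟪JA xb, y⟫_ℝ)) ∧
      (∃ a ∈ A (JA xb), ∃ b ∈ B (JA xb), a + b + T (JA xb) = 0) ∧
      Tendsto (fun k => T (u k)) atTop (nhds (T (JA xb))) := by
  have hβ2 : (0:ℝ) < 2 * β := by linarith
  set c : ℝ := 2 - γ / (2 * β) with hc
  have hc0 : 0 < c := by
    rw [hc, sub_pos, div_lt_iff₀ hβ2]; linarith
  -- resolvent membership facts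
  have hJAmem : ∀ w : H, w - JA w ∈ γ • A (JA w) := fun w => (hJA w (JA w)).mp rfl
  have hJBmem : ∀ w : H, w - JB w ∈ γ • B (JB w) := fun w => (hJB w (JB w)).mp rfl
  -- scaled monotonicity
  have hmonoA : ∀ w w' m m' : H, m ∈ γ • A w → m' ∈ γ • A w' → 0 ≤ ⟪w - w', m - m'⟫_ℝ := by
    intro w w' m m' hm hm'
    obtain ⟨a, ha, rfl⟩ := Set.mem_smul_set.mp hm
    obtain ⟨a', ha', rfl⟩ := Set.mem_smul_set.mp hm'
    rw [← smul_sub, real_inner_smul_right]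
    exact mul_nonneg hγ0.le (hA w w' a a' ha ha')
  have hmonoB : ∀ w w' m m' : H, m ∈ γ • B w → m' ∈ γ • B w' → 0 ≤ ⟪w - w', m - m'⟫_ℝ := by
    intro w w' m m' hm hm'
    obtain ⟨a, ha, rfl⟩ := Set.mem_smul_set.mp hm
    obtain ⟨a', ha', rfl⟩ := Set.mem_smul_set.mp hm'
    rw [← smul_sub, real_inner_smul_right]
    exact mul_nonneg hγ0.le (hB w w' a a' ha ha')
  -- displacement operator
  set df : H → H := fun w => JB ((2:ℝ) • JA w - w - γ • T (JA w)) - JA w with hdf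
  have hvu : ∀ k, v k - u k = df (x k) := by
    intro k; rw [hv k, hu k, hdf]
  -- Young-type inequality
  have young : ∀ D t : H, -(γ * ⟪D, t⟫_ℝ) ≤ γ / (4*β) * ‖D‖^2 + γ*β*‖t‖^2 := by
    intro D t
    have h0 : (0:ℝ) ≤ γ / (4*β) * ‖D + (2*β) • t‖^2 := by positivity
    rw [norm_add_sq_real, real_inner_smul_right, norm_smul, Real.norm_eq_abs,
      abs_of_pos hβ2] at h0
    have hexp : γ/(4*β) * (‖D‖^2 + 2*((2*β)*⟪D,t⟫_ℝ) + (2*β*‖t‖)^2)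
        = γ/(4*β)*‖D‖^2 + γ*⟪D,t⟫_ℝ + γ*β*‖t‖^2 := by
      field_simp; ring
    rw [hexp] at h0; linarith
  -- key inequality
  have key : ∀ w w' : H, ⟪w - w', df w - df w'⟫_ℝ + ‖df w - df w'‖^2
      + γ * ⟪df w - df w', T (JA w) - T (JA w')⟫_ℝ
      + γ*β*‖T (JA w) - T (JA w')‖^2 ≤ 0 := by
    intro w w'
    set P : H := JA w - JA w' with hP
    set Q : H := JB ((2:ℝ) • JA w - w - γ • T (JA w))
      - JB ((2:ℝ) • JA w' - w' - γ • T (JA w')) with hQ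
    set t : H := T (JA w) - T (JA w') with ht
    set a : H := w - w' with ha
    have hDQ : df w - df w' = Q - P := by
      simp only [hdf]; rw [hP, hQ]; abel
    have hp : 0 ≤ ⟪P, a - P⟫_ℝ := by
      have h := hmonoA (JA w) (JA w') _ _ (hJAmem w) (hJAmem w')
      have e : (w - JA w) - (w' - JA w') = a - P := by rw [ha, hP]; abel
      rwa [e] at h
    have hq : 0 ≤ ⟪Q, (2:ℝ) • P - a - γ • t - Q⟫_ℝ := by
      have h := hmonoB _ _ _ _ (hJBmem ((2:ℝ) • JA w - w - γ • T (JA w)))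
        (hJBmem ((2:ℝ) • JA w' - w' - γ • T (JA w')))
      have e : ((2:ℝ) • JA w - w - γ • T (JA w) - JB ((2:ℝ) • JA w - w - γ • T (JA w)))
          - ((2:ℝ) • JA w' - w' - γ • T (JA w') - JB ((2:ℝ) • JA w' - w' - γ • T (JA w')))
          = (2:ℝ) • P - a - γ • t - Q := by
        rw [hP, ha, ht, hQ]; module
      rwa [e] at h
    have hco : γ * (β * ‖t‖^2) ≤ γ * ⟪P, t⟫_ℝ :=
      mul_le_mul_of_nonneg_left (hT (JA w) (JA w')) hγ0.le
    rw [hDQ]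
    have e1 : ‖Q - P‖^2 = ⟪Q - P, Q - P⟫_ℝ := (real_inner_self_eq_norm_sq _).symm
    rw [e1]
    simp only [inner_sub_left, inner_sub_right, real_inner_smul_right] at hp hq ⊢
    linarith [real_inner_comm P Q, real_inner_comm P t, real_inner_comm Q t,
      real_inner_comm a P, real_inner_comm a Q, real_inner_comm a t, hp, hq, hco]
  -- keyD: averaged-operator inequality
  have keyD : ∀ w w' : H, 2*⟪w - w', df w - df w'⟫_ℝ + c*‖df w - df w'‖^2 ≤ 0 := by
    intro w w'
    have hk := key w w'
    have hy := young (df w - df w') (T (JA w) - T (JA w'))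
    have h3 : c*‖df w - df w'‖^2
        = 2*‖df w - df w'‖^2 - 2*(γ/(4*β)*‖df w - df w'‖^2) := by
      rw [hc]
      have : γ / (2*β) = 2*(γ/(4*β)) := by field_simp; ring
      rw [this]; ring
    rw [h3]; linarith
  -- fixed point from a zero of A+B+T
  obtain ⟨z0, a0, ha0, b0, hb0, hzero0⟩ := hzer
  set zs : H := z0 + γ • a0 with hzs
  have hJAzs : JA zs = z0 := by
    rw [hJA]
    exact Set.mem_smul_set.mpr ⟨a0, ha0, by rw [hzs]; abel⟩
  have hb0'' : b0 = -a0 - T z0 := by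
    have h : b0 = a0 + b0 + T z0 - a0 - T z0 := by abel
    rw [hzero0] at h
    rw [h]; abel
  have hdfzs : df zs = 0 := by
    have harg : (2:ℝ) • JA zs - zs - γ • T (JA zs) = z0 + γ • b0 := by
      rw [hJAzs, hzs, hb0'']
      module
    have hJBz : JB (z0 + γ • b0) = z0 := by
      rw [hJB]
      exact Set.mem_smul_set.mpr ⟨b0, hb0, by abel⟩
    simp only [hdf]
    rw [harg, hJBz, hJAzs, sub_self]
  -- Fejer inequality
  have fejer : ∀ z : H, df z = 0 → ∀ k,
      ‖x (k+1) - z‖^2 ≤ ‖x k - z‖^2 - lam k * (c - lam k) * ‖v k - u k‖^2 := by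
    intro z hz k
    have hD := keyD (x k) z
    rw [hz, sub_zero] at hD
    have hx1 : x (k+1) - z = (x k - z) + lam k • df (x k) := by
      rw [hx k, hvu k]; abel
    rw [hvu k, hx1, norm_add_sq_real, real_inner_smul_right, norm_smul,
      Real.norm_eq_abs, abs_of_pos (hlam k).1]
    have hmul := mul_le_mul_of_nonneg_left hD (hlam k).1.le
    nlinarith [hmul, sq_nonneg (lam k * ‖df (x k)‖)]
  -- antitone distances to fixed points
  have hdist_anti : ∀ z : H, df z = 0 → Antitone (fun k => ‖x k - z‖^2) := by
    intro z hz
    apply antitone_nat_of_succ_le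
    intro k
    have h := fejer z hz k
    have hnn : 0 ≤ lam k * (c - lam k) * ‖v k - u k‖^2 := by
      have := (hlam k).1
      have := (hlam k).2
      have h1 := (hlam k).1
      have h2 := (hlam k).2
      have : (0:ℝ) ≤ c - lam k := by linarith
      positivity
    linarith
  -- Fejer: sum bound
  set Rb : ℝ := ‖x 0 - zs‖ with hRb
  have hxRb : ∀ k, ‖x k - zs‖ ≤ Rb := by
    intro k
    have h := hdist_anti zs hdfzs (Nat.zero_le k)
    simp only at h
    nlinarith [norm_nonneg (x k - zs), norm_nonneg (x 0 - zs)]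
  have hxnorm : ∀ k, ‖x k‖ ≤ Rb + ‖zs‖ := by
    intro k
    calc ‖x k‖ = ‖(x k - zs) + zs‖ := by rw [sub_add_cancel]
      _ ≤ ‖x k - zs‖ + ‖zs‖ := norm_add_le _ _
      _ ≤ Rb + ‖zs‖ := by linarith [hxRb k]
  have hsum : ∀ n, (∑ k ∈ Finset.range n, lam k * (c - lam k) * ‖v k - u k‖^2)
      + ‖x n - zs‖^2 ≤ Rb^2 := by
    intro n
    induction n with
    | zero => simp [hRb]
    | succ n ih =>
      rw [Finset.sum_range_succ]
      have h := fejer zs hdfzs n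
      linarith
  -- the nonexpansive reflected map
  set Nf : H → H := fun w => w + c • df w with hNf
  have hNne : ∀ w w' : H, ‖Nf w - Nf w'‖ ≤ ‖w - w'‖ := by
    intro w w'
    have hD := keyD w w'
    have hsq : ‖Nf w - Nf w'‖^2 ≤ ‖w - w'‖^2 := by
      have hid : Nf w - Nf w' = (w - w') + c • (df w - df w') := by
        simp only [hNf]; module
      rw [hid, norm_add_sq_real, real_inner_smul_right, norm_smul, Real.norm_eq_abs,
        abs_of_pos hc0]
      linarith [mul_le_mul_of_nonneg_left hD hc0.le]
    have h1 := norm_nonneg (Nf w - Nf w')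
    have h2 := norm_nonneg (w - w')
    nlinarith [hsq]
  have hNsub : ∀ w : H, Nf w - w = c • df w := by
    intro w; simp only [hNf]; abel
  -- residual monotonicity
  have hrmono : ∀ k, ‖df (x (k+1))‖ ≤ ‖df (x k)‖ := by
    intro k
    have hl1 := (hlam k).1
    have hl2 := (hlam k).2
    set μ : ℝ := lam k / c with hμ
    have hμ1 : 0 < μ := div_pos hl1 hc0
    have hμ2 : μ ≤ 1 := (div_le_one hc0).mpr hl2
    have hstep : x (k+1) - x k = μ • (Nf (x k) - x k) := by
      rw [hNsub, hx k, hvu k, smul_smul, hμ, div_mul_cancel₀ _ (ne_of_gt hc0)]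
      abel
    have h1 : c * ‖df (x (k+1))‖ = ‖Nf (x (k+1)) - x (k+1)‖ := by
      rw [hNsub, norm_smul, Real.norm_eq_abs, abs_of_pos hc0]
    have h2 : c * ‖df (x k)‖ = ‖Nf (x k) - x k‖ := by
      rw [hNsub, norm_smul, Real.norm_eq_abs, abs_of_pos hc0]
    have h3 : ‖Nf (x (k+1)) - x (k+1)‖
        ≤ ‖Nf (x (k+1)) - Nf (x k)‖ + ‖Nf (x k) - x (k+1)‖ := by
      have := dist_triangle (Nf (x (k+1))) (Nf (x k)) (x (k+1))
      simpa [dist_eq_norm] using this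
    have h4 : ‖Nf (x (k+1)) - Nf (x k)‖ ≤ ‖x (k+1) - x k‖ := hNne _ _
    have h5 : ‖x (k+1) - x k‖ = μ * ‖Nf (x k) - x k‖ := by
      rw [hstep, norm_smul, Real.norm_eq_abs, abs_of_pos hμ1]
    have h6 : ‖Nf (x k) - x (k+1)‖ = (1 - μ) * ‖Nf (x k) - x k‖ := by
      have : Nf (x k) - x (k+1) = (1 - μ) • (Nf (x k) - x k) := by
        have hx1 : x (k+1) = x k + μ • (Nf (x k) - x k) := by
          rw [← hstep]; abel
        rw [hx1, sub_smul, one_smul]; abel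
      rw [this, norm_smul, Real.norm_eq_abs, abs_of_nonneg (by linarith : (0:ℝ) ≤ 1 - μ)]
    have : c * ‖df (x (k+1))‖ ≤ c * ‖df (x k)‖ := by
      rw [h1, h2]
      calc ‖Nf (x (k+1)) - x (k+1)‖ ≤ ‖Nf (x (k+1)) - Nf (x k)‖ + ‖Nf (x k) - x (k+1)‖ := h3
        _ ≤ μ * ‖Nf (x k) - x k‖ + (1 - μ) * ‖Nf (x k) - x k‖ := by
            rw [← h5, ← h6]; exact add_le_add_left h4 _
        _ = ‖Nf (x k) - x k‖ := by ring
    exact le_of_mul_le_mul_left (by linarith) hc0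
  -- residual tends to zero
  have hr0 : Tendsto (fun k => ‖v k - u k‖) atTop (𝓝 0) := by
    have hanti : Antitone (fun k => ‖v k - u k‖) := by
      apply antitone_nat_of_succ_le
      intro k
      rw [hvu k, hvu (k+1)]
      exact hrmono k
    have hblw : BddBelow (Set.range fun k => ‖v k - u k‖) :=
      ⟨0, by rintro _ ⟨k, rfl⟩; exact norm_nonneg _⟩
    have htends : Tendsto (fun k => ‖v k - u k‖) atTop (𝓝 (⨅ k, ‖v k - u k‖)) :=
      tendsto_atTop_ciInf hanti hblw
    have hL0 : 0 ≤ ⨅ k, ‖v k - u k‖ := le_ciInf fun k => norm_nonneg _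
    rcases eq_or_lt_of_le hL0 with hL | hL
    · rwa [← hL] at htends
    · exfalso
      set L : ℝ := ⨅ k, ‖v k - u k‖ with hLdef
      have hLle : ∀ k, L ≤ ‖v k - u k‖ := fun k => ciInf_le hblw k
      have hb : ∀ n, (∑ k ∈ Finset.range n, lam k * (c - lam k)) * L^2 ≤ Rb^2 := by
        intro n
        rw [Finset.sum_mul]
        have h1 : ∀ k ∈ Finset.range n,
            lam k * (c - lam k) * L^2 ≤ lam k * (c - lam k) * ‖v k - u k‖^2 := by
          intro k _
          apply mul_le_mul_of_nonneg_left
          · exact pow_le_pow_left₀ hL.le (hLle k) 2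
          · have h1 := (hlam k).1
            have h2 := (hlam k).2
            nlinarith
        calc (∑ k ∈ Finset.range n, lam k * (c - lam k) * L^2)
            ≤ ∑ k ∈ Finset.range n, lam k * (c - lam k) * ‖v k - u k‖^2 :=
              Finset.sum_le_sum h1
          _ ≤ Rb^2 := by have := hsum n; nlinarith [sq_nonneg ‖x n - zs‖]
      obtain ⟨n, hn⟩ := (hdiv.eventually_ge_atTop (Rb^2/L^2 + 1)).exists
      have h2 := mul_le_mul_of_nonneg_right hn (sq_nonneg L)
      rw [add_mul, div_mul_cancel₀ _ (by positivity : L^2 ≠ 0), one_mul] at h2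
      have h3 := hb n
      nlinarith [pow_pos hL 2]
  have hd0 : Tendsto (fun k => v k - u k) atTop (𝓝 0) :=
    tendsto_zero_iff_norm_tendsto_zero.mpr hr0
  -- demiclosedness along ultrafilters
  have hdemi : ∀ (G : Ultrafilter ℕ), (↑G : Filter ℕ) ≤ atTop → ∀ p : H,
      (∀ y, Tendsto (fun k => ⟪x k, y⟫_ℝ) ↑G (𝓝 ⟪p, y⟫_ℝ)) → df p = 0 := by
    intro G hG p hp
    set Cp : ℝ := Rb + ‖zs - p‖ with hCp
    have hCpb : ∀ k, ‖x k - p‖ ≤ Cp := by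
      intro k
      calc ‖x k - p‖ = ‖(x k - zs) + (zs - p)‖ := by rw [sub_add_sub_cancel]
        _ ≤ ‖x k - zs‖ + ‖zs - p‖ := norm_add_le _ _
        _ ≤ Cp := by have := hxRb k; rw [hCp]; linarith
    have hrG : Tendsto (fun k => ‖v k - u k‖) ↑G (𝓝 0) := hr0.mono_left hG
    set q : H := p - Nf p with hq
    have hineq : ∀ k, 2*⟪x k, q⟫_ℝ - 2*⟪p, q⟫_ℝ + ‖q‖^2
        ≤ 2*(c*‖v k - u k‖)*Cp + (c*‖v k - u k‖)^2 := by
      intro k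
      have e0 : ‖x k - Nf (x k)‖ = c * ‖v k - u k‖ := by
        have h : x k - Nf (x k) = -(c • df (x k)) := by rw [← hNsub]; abel
        rw [h, norm_neg, norm_smul, Real.norm_eq_abs, abs_of_pos hc0, hvu k]
      have h1 : ‖x k - Nf p‖ ≤ c * ‖v k - u k‖ + ‖x k - p‖ := by
        calc ‖x k - Nf p‖ ≤ ‖x k - Nf (x k)‖ + ‖Nf (x k) - Nf p‖ := by
              have := dist_triangle (x k) (Nf (x k)) (Nf p)
              simpa [dist_eq_norm] using this
          _ ≤ c * ‖v k - u k‖ + ‖x k - p‖ := by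
              rw [e0]; exact add_le_add_right (hNne _ _) _
      have h2 : ‖x k - Nf p‖^2 = ‖x k - p‖^2 + 2*⟪x k - p, q⟫_ℝ + ‖q‖^2 := by
        have h : x k - Nf p = (x k - p) + q := by rw [hq]; abel
        rw [h, norm_add_sq_real]
      have h3 : ‖x k - Nf p‖^2 ≤ (c * ‖v k - u k‖ + ‖x k - p‖)^2 :=
        pow_le_pow_left₀ (norm_nonneg _) h1 2
      have h4 : ⟪x k - p, q⟫_ℝ = ⟪x k, q⟫_ℝ - ⟪p, q⟫_ℝ := inner_sub_left _ _ _
      have h5 : (c*‖v k - u k‖)*‖x k - p‖ ≤ (c*‖v k - u k‖)*Cp :=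
        mul_le_mul_of_nonneg_left (hCpb k) (by positivity)
      nlinarith [h2, h3, h4, h5]
    have hlhs : Tendsto (fun k => 2*⟪x k, q⟫_ℝ - 2*⟪p, q⟫_ℝ + ‖q‖^2) ↑G
        (𝓝 (2*⟪p, q⟫_ℝ - 2*⟪p, q⟫_ℝ + ‖q‖^2)) :=
      (((hp q).const_mul 2).sub_const _).add_const _
    have hrhs : Tendsto (fun k => 2*(c*‖v k - u k‖)*Cp + (c*‖v k - u k‖)^2) ↑G (𝓝 0) := by
      have h1 : Tendsto (fun k => c*‖v k - u k‖) ↑G (𝓝 (c * 0)) := hrG.const_mul c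
      have h2 := ((h1.const_mul 2).mul_const Cp).add (h1.pow 2)
      simpa using h2
    have hq2 : ‖q‖^2 ≤ 0 := by
      have h := le_of_tendsto_of_tendsto' hlhs hrhs (fun k => hineq k)
      simpa using h
    have hq0 : q = 0 := by
      have h : ‖q‖ = 0 := by nlinarith [norm_nonneg q]
      exact norm_eq_zero.mp h
    have h7 : c • df p = -q := by rw [hq, ← hNsub p]; abel
    rw [hq0, neg_zero] at h7
    exact (smul_eq_zero.mp h7).resolve_left (ne_of_gt hc0)
  -- the weak limit
  obtain ⟨xb, hxbU⟩ := aux_weak_cluster x (Rb + ‖zs‖) hxnorm (Ultrafilter.of atTop)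
  have hUle : (↑(Ultrafilter.of (atTop : Filter ℕ)) : Filter ℕ) ≤ atTop := Ultrafilter.of_le _
  have hdfxb : df xb = 0 := hdemi _ hUle xb hxbU
  have hdistlim : ∀ p : H, df p = 0 → Tendsto (fun k => ‖x k - p‖^2) atTop
      (𝓝 (⨅ k, ‖x k - p‖^2)) := fun p hp =>
    tendsto_atTop_ciInf (hdist_anti p hp) ⟨0, by rintro _ ⟨k, rfl⟩; positivity⟩
  have hxw : ∀ y, Tendsto (fun k => ⟪x k, y⟫_ℝ) atTop (𝓝 ⟪xb, y⟫_ℝ) := by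
    intro y
    rw [Filter.tendsto_iff_ultrafilter]
    intro G hG
    obtain ⟨p, hpG⟩ := aux_weak_cluster x (Rb + ‖zs‖) hxnorm G
    have hdfp : df p = 0 := hdemi G hG p hpG
    have he : Tendsto (fun k => ‖x k - xb‖^2 - ‖x k - p‖^2) atTop
        (𝓝 ((⨅ k, ‖x k - xb‖^2) - ⨅ k, ‖x k - p‖^2)) :=
      (hdistlim xb hdfxb).sub (hdistlim p hdfp)
    have hid : ∀ k, ‖x k - xb‖^2 - ‖x k - p‖^2
        = -2*⟪x k, xb - p⟫_ℝ + (‖xb‖^2 - ‖p‖^2) := by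
      intro k
      rw [norm_sub_sq_real, norm_sub_sq_real, inner_sub_right]
      ring
    have hgen : ∀ (F : Filter ℕ), F ≤ atTop → F.NeBot → ∀ w : H,
        (∀ y, Tendsto (fun k => ⟪x k, y⟫_ℝ) F (𝓝 ⟪w, y⟫_ℝ)) →
        -2*⟪w, xb - p⟫_ℝ + (‖xb‖^2 - ‖p‖^2)
          = (⨅ k, ‖x k - xb‖^2) - ⨅ k, ‖x k - p‖^2 := by
      intro F hF hne w hw
      have h1 : Tendsto (fun k => ‖x k - xb‖^2 - ‖x k - p‖^2) F
          (𝓝 (-2*⟪w, xb - p⟫_ℝ + (‖xb‖^2 - ‖p‖^2))) := by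
        have h := ((hw (xb - p)).const_mul (-2)).add_const (‖xb‖^2 - ‖p‖^2)
        exact h.congr fun k => (hid k).symm
      exact tendsto_nhds_unique h1 (he.mono_left hF)
    have e1 := hgen _ hUle (Ultrafilter.neBot _) xb hxbU
    have e2 := hgen _ hG G.neBot p hpG
    have hinner : ⟪xb - p, xb - p⟫_ℝ = 0 := by
      rw [inner_sub_left]; linarith
    have hsub : xb - p = 0 := by
      have h : ‖xb - p‖^2 = 0 := by rw [← real_inner_self_eq_norm_sq]; exact hinner
      have h2 : ‖xb - p‖ = 0 := by nlinarith [norm_nonneg (xb - p)]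
      exact norm_eq_zero.mp h2
    have hpxb : p = xb := by
      have := sub_eq_zero.mp hsub; exact this.symm
    rw [← hpxb]
    exact hpG y
  -- the weak limit of u and remaining claims
  set ub : H := JA xb with hub
  have hΩ : JA xb = JB ((2:ℝ) • JA xb - xb - γ • T (JA xb)) := by
    have h := hdfxb
    simp only [hdf] at h
    exact (sub_eq_zero.mp h).symm
  have hzer_out : ∃ a ∈ A (JA xb), ∃ b ∈ B (JA xb), a + b + T (JA xb) = 0 := by
    obtain ⟨a, haA, haeq⟩ := Set.mem_smul_set.mp (hJAmem xb)
    obtain ⟨b, hbB, hbeq⟩ := Set.mem_smul_set.mp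
      ((hJB ((2:ℝ) • JA xb - xb - γ • T (JA xb)) (JA xb)).mp hΩ.symm)
    refine ⟨a, haA, b, hbB, ?_⟩
    have h : γ • (a + b + T (JA xb)) = 0 := by
      rw [smul_add, smul_add, haeq, hbeq]
      module
    exact (smul_eq_zero.mp h).resolve_left (ne_of_gt hγ0)
  -- nonexpansiveness of JA
  have hune : ∀ w w' : H, ‖JA w - JA w'‖ ≤ ‖w - w'‖ := by
    intro w w'
    have h := hmonoA (JA w) (JA w') _ _ (hJAmem w) (hJAmem w')
    have e : (w - JA w) - (w' - JA w') = (w - w') - (JA w - JA w') := by abel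
    rw [e, inner_sub_right] at h
    have h2 : ⟪JA w - JA w', JA w - JA w'⟫_ℝ = ‖JA w - JA w'‖^2 :=
      real_inner_self_eq_norm_sq _
    have h3 := real_inner_le_norm (JA w - JA w') (w - w')
    nlinarith [norm_nonneg (JA w - JA w'), norm_nonneg (w - w')]
  set Cb : ℝ := Rb + ‖zs - xb‖ with hCbdef
  have hxxb : ∀ k, ‖x k - xb‖ ≤ Cb := by
    intro k
    calc ‖x k - xb‖ = ‖(x k - zs) + (zs - xb)‖ := by rw [sub_add_sub_cancel]
      _ ≤ ‖x k - zs‖ + ‖zs - xb‖ := norm_add_le _ _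
      _ ≤ Cb := by have := hxRb k; rw [hCbdef]; linarith
  have huub : ∀ k, ‖u k - ub‖ ≤ Cb := by
    intro k; rw [hu k, hub]
    exact le_trans (hune (x k) xb) (hxxb k)
  have hTb : ∀ k, ‖T (u k) - T ub‖ ≤ Cb / β := by
    intro k
    rw [le_div_iff₀ hβ]
    have h := hT (u k) ub
    have h2 := real_inner_le_norm (u k - ub) (T (u k) - T ub)
    have h4 := mul_le_mul_of_nonneg_right (huub k) (norm_nonneg (T (u k) - T ub))
    have hCb0 : (0:ℝ) ≤ Cb := le_trans (norm_nonneg _) (huub 0)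
    rcases eq_or_lt_of_le (norm_nonneg (T (u k) - T ub)) with h0 | h0
    · rw [← h0]; simpa using hCb0
    · nlinarith
  -- strong convergence of T (u k)
  have hTconv : Tendsto (fun k => T (u k)) atTop (𝓝 (T ub)) := by
    have hkey : ∀ k, γ*β*‖T (u k) - T ub‖^2 ≤ (Cb + γ*(Cb/β)) * ‖v k - u k‖ := by
      intro k
      have h := key (x k) xb
      rw [hdfxb, sub_zero, ← hvu k, ← hu k, ← hub] at h
      have c1 := (abs_le.mp (abs_real_inner_le_norm (x k - xb) (v k - u k))).1
      have c2 := (abs_le.mp (abs_real_inner_le_norm (v k - u k) (T (u k) - T ub))).1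
      have c2' := mul_le_mul_of_nonneg_left c2 hγ0.le
      have c3 := mul_le_mul_of_nonneg_right (hxxb k) (norm_nonneg (v k - u k))
      have c4 := mul_le_mul_of_nonneg_left (hTb k)
        (by positivity : (0:ℝ) ≤ γ * ‖v k - u k‖)
      clear_value Cb
      linarith [h, c1, c2', c3, c4, sq_nonneg ‖v k - u k‖]
    have hg : Tendsto (fun k => (Cb + γ*(Cb/β)) * ‖v k - u k‖) atTop (𝓝 0) := by
      have := hr0.const_mul (Cb + γ*(Cb/β))
      simpa using this
    have hsq0 : Tendsto (fun k => ‖T (u k) - T ub‖^2) atTop (𝓝 0) := by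
      apply squeeze_zero (fun k => sq_nonneg _) (g := fun k =>
        ((Cb + γ*(Cb/β)) * ‖v k - u k‖) / (γ*β))
      · intro k
        rw [le_div_iff₀ (by positivity : (0:ℝ) < γ*β)]
        have := hkey k; nlinarith
      · simpa using hg.div_const (γ*β)
    have hsqn : Tendsto (fun k => ‖T (u k) - T ub‖) atTop (𝓝 0) := by
      have h := (Real.continuous_sqrt.tendsto 0).comp hsq0
      have h2 : ∀ k, Real.sqrt (‖T (u k) - T ub‖^2) = ‖T (u k) - T ub‖ :=
        fun k => Real.sqrt_sq (norm_nonneg _)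
      have h3 := h.congr h2
      simpa using h3
    rw [tendsto_iff_norm_sub_tendsto_zero]
    exact hsqn
  -- bounds needed for the u-weak-convergence argument
  have hdanti : Antitone (fun k => ‖v k - u k‖) := by
    apply antitone_nat_of_succ_le
    intro k; rw [hvu k, hvu (k+1)]; exact hrmono k
  have hMd : ∀ k, ‖v k - u k‖ ≤ ‖v 0 - u 0‖ := fun k => hdanti (Nat.zero_le k)
  set Mu : ℝ := Cb + ‖ub‖ with hMudef
  have hMu : ∀ k, ‖u k‖ ≤ Mu := by
    intro k
    calc ‖u k‖ = ‖(u k - ub) + ub‖ := by rw [sub_add_cancel]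
      _ ≤ ‖u k - ub‖ + ‖ub‖ := norm_add_le _ _
      _ ≤ Mu := by have := huub k; rw [hMudef]; linarith
  set Mx : ℝ := Rb + ‖zs‖ with hMxdef
  set MT : ℝ := Cb/β + ‖T ub‖ with hMTdef
  have hMT : ∀ k, ‖T (u k)‖ ≤ MT := by
    intro k
    calc ‖T (u k)‖ = ‖(T (u k) - T ub) + T ub‖ := by rw [sub_add_cancel]
      _ ≤ ‖T (u k) - T ub‖ + ‖T ub‖ := norm_add_le _ _
      _ ≤ MT := by have := hTb k; rw [hMTdef]; linarith
  set Mm : ℝ := 2*Mu + Mx + γ*MT + (Mu + ‖v 0 - u 0‖) with hMmdef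
  have hMm : ∀ k, ‖(2:ℝ) • u k - x k - γ • T (u k) - v k‖ ≤ Mm := by
    intro k
    have hv' : ‖v k‖ ≤ Mu + ‖v 0 - u 0‖ := by
      calc ‖v k‖ = ‖u k + (v k - u k)‖ := by rw [add_sub_cancel]
        _ ≤ ‖u k‖ + ‖v k - u k‖ := norm_add_le _ _
        _ ≤ Mu + ‖v 0 - u 0‖ := add_le_add (hMu k) (hMd k)
    calc ‖(2:ℝ) • u k - x k - γ • T (u k) - v k‖
        ≤ ‖(2:ℝ) • u k - x k - γ • T (u k)‖ + ‖v k‖ := norm_sub_le _ _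
      _ ≤ (‖(2:ℝ) • u k - x k‖ + ‖γ • T (u k)‖) + ‖v k‖ := by
          exact add_le_add_left (norm_sub_le _ _) _
      _ ≤ ((‖(2:ℝ) • u k‖ + ‖x k‖) + ‖γ • T (u k)‖) + ‖v k‖ := by
          exact add_le_add_left (add_le_add_left (norm_sub_le _ _) _) _
      _ ≤ Mm := by
          rw [norm_smul, norm_smul, Real.norm_eq_abs, Real.norm_eq_abs,
            abs_of_pos hγ0, abs_of_pos (by norm_num : (0:ℝ) < 2), hMmdef]
          have := hMu k; have := hxnorm k; have := hMT k
          have h5 := mul_le_mul_of_nonneg_left (hMT k) hγ0.le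
          nlinarith [hMu k]
  have hMτ : ∀ k, |⟪u k, x k - u k⟫_ℝ| ≤ Mu * (Mx + Mu) := by
    intro k
    have h1 := abs_real_inner_le_norm (u k) (x k - u k)
    have h2 : ‖x k - u k‖ ≤ Mx + Mu := le_trans (norm_sub_le _ _)
      (add_le_add (hxnorm k) (hMu k))
    have hMu0 : (0:ℝ) ≤ Mu := le_trans (norm_nonneg _) (hMu 0)
    calc |⟪u k, x k - u k⟫_ℝ| ≤ ‖u k‖ * ‖x k - u k‖ := h1
      _ ≤ Mu * (Mx + Mu) := mul_le_mul (hMu k) h2 (norm_nonneg _) hMu0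
  -- weak convergence of u
  have hweaku : ∀ y, Tendsto (fun k => ⟪u k, y⟫_ℝ) atTop (𝓝 ⟪ub, y⟫_ℝ) := by
    intro y
    rw [Filter.tendsto_iff_ultrafilter]
    intro G hG
    obtain ⟨p, hpG⟩ := aux_weak_cluster u Mu hMu G
    obtain ⟨τ, hτG⟩ := aux_real_cluster (fun k => ⟪u k, x k - u k⟫_ℝ)
      (Mu * (Mx + Mu)) hMτ G
    have hxG : ∀ w : H, Tendsto (fun k => ⟪x k, w⟫_ℝ) ↑G (𝓝 ⟪xb, w⟫_ℝ) :=
      fun w => (hxw w).mono_left hG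
    have hdG : Tendsto (fun k => v k - u k) ↑G (𝓝 0) := hd0.mono_left hG
    have hTG : Tendsto (fun k => T (u k)) ↑G (𝓝 (T ub)) := hTconv.mono_left hG
    have hTG0 : Tendsto (fun k => T (u k) - T ub) ↑G (𝓝 0) := by
      have := hTG.sub_const (T ub)
      simpa using this
    -- first limit inequality, from monotonicity of A
    have he1 : 0 ≤ τ - ⟪p, xb - ub⟫_ℝ - (⟪xb, ub⟫_ℝ - ⟪p, ub⟫_ℝ) + ⟪ub, xb - ub⟫_ℝ := by
      have hseq : ∀ k, 0 ≤ (⟪u k, x k - u k⟫_ℝ - ⟪u k, xb - ub⟫_ℝ)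
          - (⟪x k, ub⟫_ℝ - ⟪u k, ub⟫_ℝ) + ⟪ub, xb - ub⟫_ℝ := by
        intro k
        have mem1 : x k - u k ∈ γ • A (u k) := by
          have h := hJAmem (x k); rw [← hu k] at h; exact h
        have mem2 : xb - ub ∈ γ • A ub := by
          have h := hJAmem xb; rw [← hub] at h; exact h
        have h := hmonoA (u k) ub _ _ mem1 mem2
        have e : ⟪u k - ub, (x k - u k) - (xb - ub)⟫_ℝ
            = (⟪u k, x k - u k⟫_ℝ - ⟪u k, xb - ub⟫_ℝ)
              - (⟪x k, ub⟫_ℝ - ⟪u k, ub⟫_ℝ) + ⟪ub, xb - ub⟫_ℝ := by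
          simp only [inner_sub_left, inner_sub_right, real_inner_comm]
          ring
        rw [e] at h
        exact h
      have hlim : Tendsto (fun k => (⟪u k, x k - u k⟫_ℝ - ⟪u k, xb - ub⟫_ℝ)
          - (⟪x k, ub⟫_ℝ - ⟪u k, ub⟫_ℝ) + ⟪ub, xb - ub⟫_ℝ) ↑G
          (𝓝 ((τ - ⟪p, xb - ub⟫_ℝ) - (⟪xb, ub⟫_ℝ - ⟪p, ub⟫_ℝ) + ⟪ub, xb - ub⟫_ℝ)) :=
        (((hτG.sub (hpG (xb - ub))).sub ((hxG ub).sub (hpG ub))).add_const _)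
      have := le_of_tendsto_of_tendsto'
        (tendsto_const_nhds : Tendsto (fun _ : ℕ => (0:ℝ)) ↑G (𝓝 0)) hlim hseq
      linarith
    -- second limit inequality, from monotonicity of B
    set w2 : H := (2:ℝ) • p - xb - γ • T ub with hw2
    set y2 : H := JB w2 with hy2
    have hy2mem : w2 - y2 ∈ γ • B y2 := by
      have h := hJBmem w2; rw [← hy2] at h; exact h
    have he2 : 0 ≤ ((-τ - 0 - γ*⟪p, T ub⟫_ℝ + 0) - (⟪p, w2 - y2⟫_ℝ + 0)
        - (⟪p, y2⟫_ℝ - ⟪xb, y2⟫_ℝ - 0 - γ*⟪T ub, y2⟫_ℝ) + ⟪y2, w2 - y2⟫_ℝ) := by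
      have hseq : ∀ k, 0 ≤ ((-(⟪u k, x k - u k⟫_ℝ) - ⟪u k, v k - u k⟫_ℝ
            - γ*⟪u k, T (u k)⟫_ℝ
            + ⟪v k - u k, (2:ℝ) • u k - x k - γ • T (u k) - v k⟫_ℝ)
          - (⟪u k, w2 - y2⟫_ℝ + ⟪v k - u k, w2 - y2⟫_ℝ)
          - (⟪u k, y2⟫_ℝ - ⟪x k, y2⟫_ℝ - ⟪v k - u k, y2⟫_ℝ - γ*⟪T (u k), y2⟫_ℝ)
          + ⟪y2, w2 - y2⟫_ℝ) := by
        intro k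
        have memk : ((2:ℝ) • u k - x k - γ • T (u k)) - v k ∈ γ • B (v k) := by
          have h := hJBmem ((2:ℝ) • u k - x k - γ • T (u k))
          rw [← hv k] at h; exact h
        have h := hmonoB (v k) y2 _ _ memk hy2mem
        have e : ⟪v k - y2, ((2:ℝ) • u k - x k - γ • T (u k) - v k) - (w2 - y2)⟫_ℝ
            = ((-(⟪u k, x k - u k⟫_ℝ) - ⟪u k, v k - u k⟫_ℝ - γ*⟪u k, T (u k)⟫_ℝ
            + ⟪v k - u k, (2:ℝ) • u k - x k - γ • T (u k) - v k⟫_ℝ)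
          - (⟪u k, w2 - y2⟫_ℝ + ⟪v k - u k, w2 - y2⟫_ℝ)
          - (⟪u k, y2⟫_ℝ - ⟪x k, y2⟫_ℝ - ⟪v k - u k, y2⟫_ℝ - γ*⟪T (u k), y2⟫_ℝ)
          + ⟪y2, w2 - y2⟫_ℝ) := by
          simp only [inner_sub_left, inner_sub_right, real_inner_smul_left,
            real_inner_smul_right, real_inner_comm]
          ring
        rw [e] at h
        exact h
      have b1 : Tendsto (fun k => -(⟪u k, x k - u k⟫_ℝ)) ↑G (𝓝 (-τ)) := hτG.neg
      have b2 : Tendsto (fun k => ⟪u k, v k - u k⟫_ℝ) ↑G (𝓝 0) :=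
        aux_inner_zero_left u (fun k => v k - u k) Mu hMu hdG
      have b3 : Tendsto (fun k => γ*⟪u k, T (u k)⟫_ℝ) ↑G (𝓝 (γ*⟪p, T ub⟫_ℝ)) := by
        have h1 := aux_inner_zero_left u (fun k => T (u k) - T ub) Mu hMu hTG0
        have h2 := h1.add (hpG (T ub))
        have h3 : Tendsto (fun k => ⟪u k, T (u k)⟫_ℝ) ↑G (𝓝 (0 + ⟪p, T ub⟫_ℝ)) := by
          refine h2.congr fun k => ?_
          rw [inner_sub_right]; ring
        have h4 := h3.const_mul γ
        simpa using h4
      have b4 : Tendsto (fun k => ⟪v k - u k,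
          (2:ℝ) • u k - x k - γ • T (u k) - v k⟫_ℝ) ↑G (𝓝 0) :=
        aux_inner_zero_right (fun k => (2:ℝ) • u k - x k - γ • T (u k) - v k)
          (fun k => v k - u k) Mm hMm hdG
      have b5 : Tendsto (fun k => ⟪u k, w2 - y2⟫_ℝ) ↑G (𝓝 ⟪p, w2 - y2⟫_ℝ) :=
        hpG (w2 - y2)
      have b6 : Tendsto (fun k => ⟪v k - u k, w2 - y2⟫_ℝ) ↑G (𝓝 0) :=
        aux_inner_zero_right (fun _ => w2 - y2) (fun k => v k - u k)
          ‖w2 - y2‖ (fun k => le_refl _) hdG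
      have b7 : Tendsto (fun k => ⟪u k, y2⟫_ℝ) ↑G (𝓝 ⟪p, y2⟫_ℝ) := hpG y2
      have b8 : Tendsto (fun k => ⟪x k, y2⟫_ℝ) ↑G (𝓝 ⟪xb, y2⟫_ℝ) := hxG y2
      have b9 : Tendsto (fun k => ⟪v k - u k, y2⟫_ℝ) ↑G (𝓝 0) :=
        aux_inner_zero_right (fun _ => y2) (fun k => v k - u k)
          ‖y2‖ (fun k => le_refl _) hdG
      have b10 : Tendsto (fun k => γ*⟪T (u k), y2⟫_ℝ) ↑G (𝓝 (γ*⟪T ub, y2⟫_ℝ)) :=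
        (hTG.inner tendsto_const_nhds).const_mul γ
      have hlim : Tendsto (fun k => ((-(⟪u k, x k - u k⟫_ℝ) - ⟪u k, v k - u k⟫_ℝ
            - γ*⟪u k, T (u k)⟫_ℝ
            + ⟪v k - u k, (2:ℝ) • u k - x k - γ • T (u k) - v k⟫_ℝ)
          - (⟪u k, w2 - y2⟫_ℝ + ⟪v k - u k, w2 - y2⟫_ℝ)
          - (⟪u k, y2⟫_ℝ - ⟪x k, y2⟫_ℝ - ⟪v k - u k, y2⟫_ℝ - γ*⟪T (u k), y2⟫_ℝ)
          + ⟪y2, w2 - y2⟫_ℝ)) ↑G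
          (𝓝 ((-τ - 0 - γ*⟪p, T ub⟫_ℝ + 0) - (⟪p, w2 - y2⟫_ℝ + 0)
          - (⟪p, y2⟫_ℝ - ⟪xb, y2⟫_ℝ - 0 - γ*⟪T ub, y2⟫_ℝ) + ⟪y2, w2 - y2⟫_ℝ)) :=
        ((((b1.sub b2).sub b3).add b4).sub (b5.add b6)).sub
          (((b7.sub b8).sub b9).sub b10) |>.add_const _
      exact le_of_tendsto_of_tendsto'
        (tendsto_const_nhds : Tendsto (fun _ : ℕ => (0:ℝ)) ↑G (𝓝 0)) hlim hseq
    -- combine the two inequalities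
    have hfinal : ‖p - ub‖^2 + ‖p - y2‖^2 ≤ 0 := by
      rw [norm_sub_sq_real, norm_sub_sq_real]
      simp only [hw2, inner_sub_left, inner_sub_right, real_inner_smul_left,
        real_inner_smul_right, real_inner_comm, real_inner_self_eq_norm_sq] at he1 he2 ⊢
      linarith
    have hpub : p = ub := by
      have h0 : (0:ℝ) ≤ ‖p - ub‖^2 := sq_nonneg _
      have h0' : (0:ℝ) ≤ ‖p - y2‖^2 := sq_nonneg _
      have h1 : ‖p - ub‖^2 = 0 := by linarith
      have h2 : ‖p - ub‖ = 0 := by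
        nlinarith [norm_nonneg (p - ub)]
      exact sub_eq_zero.mp (norm_eq_zero.mp h2)
    rw [← hpub]
    exact hpG y
  exact ⟨xb, hxw, hΩ, fun y => hub ▸ hweaku y, hzer_out, hub ▸ hTconv⟩
end

section
/- Let A, B : H ⇉ H be maximally monotone and T : H → H β-cocoercive. Then T is constant on zer(A+B+T): if u, ũ ∈ zer(A+B+T) then T(u) = T(ũ). -/
open scoped InnerProductSpace

theorem stmt10 {H : Type*} [NormedAddCommGroup H] [InnerProductSpace ℝ H]
    (A B : H → Set H)
    (hA : ∀ x y a b, a ∈ A x → b ∈ A y → ⟪x - y, a - b⟫_ℝ ≥ 0)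
    (hB : ∀ x y a b, a ∈ B x → b ∈ B y → ⟪x - y, a - b⟫_ℝ ≥ 0)
    (hAmax : ∀ x a, (∀ y b, b ∈ A y → ⟪x - y, a - b⟫_ℝ ≥ 0) → a ∈ A x)
    (hBmax : ∀ x a, (∀ y b, b ∈ B y → ⟪x - y, a - b⟫_ℝ ≥ 0) → a ∈ B x)
    (T : H → H) (β : ℝ) (hβ : 0 < β)
    (hT : ∀ x y : H, ⟪x - y, T x - T y⟫_ℝ ≥ β * ‖T x - T y‖ ^ 2)
    (u ut : H)
    (hu : ∃ a ∈ A u, ∃ b ∈ B u, a + b + T u = 0)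
    (hut : ∃ a ∈ A ut, ∃ b ∈ B ut, a + b + T ut = 0) :
    T u = T ut := by
  obtain ⟨a, ha, b, hb, hab⟩ := hu
  obtain ⟨a', ha', b', hb', hab'⟩ := hut
  have h1 := hA u ut a a' ha ha'
  have h2 := hB u ut b b' hb hb'
  have key : ⟪u - ut, T u - T ut⟫_ℝ ≤ 0 := by
    have heq : T u - T ut = -((a - a') + (b - b')) := by
      have h := hab.trans hab'.symm
      have h2 : (a + b + T u) - (a' + b' + T ut) = 0 := sub_eq_zero.mpr h
      linear_combination (norm := abel) h2
    rw [heq, inner_neg_right, inner_add_right]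
    linarith
  have h3 := hT u ut
  have h4 : β * ‖T u - T ut‖ ^ 2 ≤ 0 := le_trans h3 key
  have h5 : ‖T u - T ut‖ ^ 2 ≤ 0 := by
    by_contra h
    push_neg at h
    linarith [mul_pos hβ h]
  have h6 : ‖T u - T ut‖ ^ 2 = 0 := le_antisymm h5 (sq_nonneg _)
  have h7 : T u - T ut = 0 := by
    have := pow_eq_zero_iff (n := 2) (by norm_num) |>.mp h6
    simpa using this
  exact sub_eq_zero.mp h7
end

section
/- Let B : H ⇉ H be maximally monotone, T : H → H β-cocoercive with zer(B+T) ≠ ∅, γ ∈ (0, 4β), and (λ_k) ⊂ (0, 2 − γ/(2β)] with Σ_k λ_k(2 − γ/(2β) − λ_k) = +∞. Then the forward-backward iterates x_{k+1} = x_k + λ_k(J_{γB}(x_k − γT(x_k)) − x_k) converge weakly to a point x̄ ∈ zer(B+T), and T(x_k) → T(x̄) strongly. -/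
open Filter Topology
open scoped InnerProductSpace Pointwise

set_option maxHeartbeats 1000000


lemma norm_add_smul_sq' {H : Type*} [NormedAddCommGroup H] [InnerProductSpace ℝ H]
    (d r : H) (c : ℝ) :
    ‖d + c • r‖ ^ 2 = ‖d‖ ^ 2 + 2 * (c * ⟪d, r⟫_ℝ) + c ^ 2 * ‖r‖ ^ 2 := by
  rw [← real_inner_self_eq_norm_sq, ← real_inner_self_eq_norm_sq, ← real_inner_self_eq_norm_sq]
  simp only [inner_add_left, inner_add_right, real_inner_smul_left, real_inner_smul_right,
    real_inner_comm d r]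
  ring

lemma key_ineq' {H : Type*} [NormedAddCommGroup H] [InnerProductSpace ℝ H]
    (β γ : ℝ) (hβ : 0 < β) (hγ : 0 < γ) (d w e : H)
    (hmono : ⟪d + w, -w - γ • e⟫_ℝ ≥ 0) (hcoco : ⟪d, e⟫_ℝ ≥ β * ‖e‖ ^ 2) :
    2 * ⟪d, w⟫_ℝ ≤ -(2 - γ / (2 * β)) * ‖w‖ ^ 2 := by
  have hexp : ⟪d + w, -w - γ • e⟫_ℝ
      = -⟪d, w⟫_ℝ - γ * ⟪d, e⟫_ℝ - ‖w‖ ^ 2 - γ * ⟪w, e⟫_ℝ := by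
    rw [← real_inner_self_eq_norm_sq]
    simp only [inner_add_left, inner_sub_right, inner_neg_right, real_inner_smul_right]
    ring
  have hwe : -⟪w, e⟫_ℝ ≤ ‖w‖ * ‖e‖ := by
    have := abs_real_inner_le_norm w e
    cases' abs_le.mp this with h1 h2
    linarith
  have h1 : ⟪d, w⟫_ℝ + ‖w‖ ^ 2 ≤ γ * ‖w‖ * ‖e‖ - γ * β * ‖e‖ ^ 2 := by
    rw [hexp] at hmono
    nlinarith [mul_le_mul_of_nonneg_left hwe hγ.le, mul_le_mul_of_nonneg_left hcoco hγ.le]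
  have h2 : γ * ‖w‖ * ‖e‖ ≤ γ * β * ‖e‖ ^ 2 + γ / (4 * β) * ‖w‖ ^ 2 := by
    have h3 : 0 ≤ γ / (4 * β) := by positivity
    have key : ‖w‖ * ‖e‖ ≤ β * ‖e‖ ^ 2 + ‖w‖ ^ 2 / (4 * β) := by
      have h4b : (0:ℝ) < 4 * β := by positivity
      rw [← sub_nonneg]
      have : β * ‖e‖ ^ 2 + ‖w‖ ^ 2 / (4 * β) - ‖w‖ * ‖e‖
          = (2 * β * ‖e‖ - ‖w‖) ^ 2 / (4 * β) := by field_simp; ring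
      rw [this]; positivity
    calc γ * ‖w‖ * ‖e‖ = γ * (‖w‖ * ‖e‖) := by ring
      _ ≤ γ * (β * ‖e‖ ^ 2 + ‖w‖ ^ 2 / (4 * β)) := by
          exact mul_le_mul_of_nonneg_left key hγ.le
      _ = γ * β * ‖e‖ ^ 2 + γ / (4 * β) * ‖w‖ ^ 2 := by field_simp
  have h4 : γ / (2 * β) = 2 * (γ / (4 * β)) := by field_simp; ring
  nlinarith [h1, h2]


lemma weak_cluster' {H : Type*} [NormedAddCommGroup H] [InnerProductSpace ℝ H] [CompleteSpace H]
    (B : H → Set H)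
    (hB : ∀ x y a b, a ∈ B x → b ∈ B y → ⟪x - y, a - b⟫_ℝ ≥ 0)
    (hBmax : ∀ x a, (∀ y b, b ∈ B y → ⟪x - y, a - b⟫_ℝ ≥ 0) → a ∈ B x)
    (T : H → H) (β : ℝ) (hβ : 0 < β)
    (hT : ∀ x y : H, ⟪x - y, T x - T y⟫_ℝ ≥ β * ‖T x - T y‖ ^ 2)
    (x p u : ℕ → H) (v : H) (M : ℝ)
    (hM : ∀ k, ‖x k‖ ≤ M)
    (hu : ∀ k, u k ∈ B (p k))
    (hpx : Tendsto (fun k => p k - x k) atTop (𝓝 0))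
    (huv : Tendsto u atTop (𝓝 (-v)))
    (hTv : Tendsto (fun k => T (x k)) atTop (𝓝 v))
    (V : Ultrafilter ℕ) (hV : ↑V ≤ (atTop : Filter ℕ)) :
    ∃ w : H, -T w ∈ B w ∧ T w = v ∧
      ∀ y : H, Tendsto (fun k => ⟪x k, y⟫_ℝ) ↑V (𝓝 ⟪w, y⟫_ℝ) := by
  have hM0 : 0 ≤ M := le_trans (norm_nonneg _) (hM 0)
  -- existence of ultrafilter limits of inner products
  have hlim : ∀ y : H, ∃ c : ℝ, Tendsto (fun k => ⟪x k, y⟫_ℝ) ↑V (𝓝 c) := by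
    intro y
    have hmem : ∀ k, ⟪x k, y⟫_ℝ ∈ Set.Icc (-(M * ‖y‖)) (M * ‖y‖) := by
      intro k
      have h1 := abs_real_inner_le_norm (x k) y
      have h2 : ‖x k‖ * ‖y‖ ≤ M * ‖y‖ :=
        mul_le_mul_of_nonneg_right (hM k) (norm_nonneg y)
      constructor <;> cases' abs_le.mp h1 with ha hb <;> linarith
    have hle : ↑(V.map fun k => ⟪x k, y⟫_ℝ) ≤ 𝓟 (Set.Icc (-(M * ‖y‖)) (M * ‖y‖)) := by
      rw [le_principal_iff]
      exact Filter.mem_map.mpr (by filter_upwards using hmem)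
    obtain ⟨c, _, hc⟩ := isCompact_iff_ultrafilter_le_nhds.mp isCompact_Icc _ hle
    exact ⟨c, hc⟩
  choose F hF using hlim
  -- F is linear and bounded
  have Fadd : ∀ y z : H, F (y + z) = F y + F z := by
    intro y z
    refine tendsto_nhds_unique (hF (y + z)) ?_
    have := (hF y).add (hF z)
    simpa only [inner_add_right] using this
  have Fsmul : ∀ (c : ℝ) (y : H), F (c • y) = c * F y := by
    intro c y
    refine tendsto_nhds_unique (hF (c • y)) ?_
    have := (hF y).const_mul c
    simpa only [real_inner_smul_right] using this
  have Fbound : ∀ y : H, ‖F y‖ ≤ M * ‖y‖ := by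
    intro y
    have habs : Tendsto (fun k => |⟪x k, y⟫_ℝ|) ↑V (𝓝 |F y|) := (hF y).abs
    rw [Real.norm_eq_abs]
    refine le_of_tendsto habs (Filter.Eventually.of_forall fun k => ?_)
    calc |⟪x k, y⟫_ℝ| ≤ ‖x k‖ * ‖y‖ := abs_real_inner_le_norm _ _
      _ ≤ M * ‖y‖ := mul_le_mul_of_nonneg_right (hM k) (norm_nonneg y)
  let L : H →ₗ[ℝ] ℝ :=
    { toFun := F, map_add' := Fadd, map_smul' := Fsmul }
  let L' : H →L[ℝ] ℝ := L.mkContinuous M Fbound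
  set w : H := (InnerProductSpace.toDual ℝ H).symm L' with hw
  have hweak : ∀ y : H, Tendsto (fun k => ⟪x k, y⟫_ℝ) ↑V (𝓝 ⟪w, y⟫_ℝ) := by
    intro y
    have : ⟪w, y⟫_ℝ = L' y := InnerProductSpace.toDual_symm_apply
    rw [this]
    exact hF y
  -- demiclosedness: -v ∈ B w
  have hVne : (↑V : Filter ℕ).NeBot := V.neBot
  have hxk_bd : ∀ q : ℕ → H, Tendsto q atTop (𝓝 0) →
      Tendsto (fun k => ⟪x k, q k⟫_ℝ) ↑V (𝓝 0) := by
    intro q hq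
    have hq' : Tendsto (fun k => M * ‖q k‖) atTop (𝓝 0) := by
      simpa using (hq.norm.const_mul M)
    refine squeeze_zero_norm (fun k => ?_) (hq'.mono_left hV)
    calc ‖⟪x k, q k⟫_ℝ‖ = |⟪x k, q k⟫_ℝ| := rfl
      _ ≤ ‖x k‖ * ‖q k‖ := abs_real_inner_le_norm _ _
      _ ≤ M * ‖q k‖ := mul_le_mul_of_nonneg_right (hM k) (norm_nonneg _)
  have hvBw : -v ∈ B w := by
    apply hBmax
    intro y b hb
    have hg : ∀ k, ⟪p k - y, u k - b⟫_ℝ ≥ 0 := fun k => hB (p k) y (u k) b (hu k) hb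
    have hsplit : ∀ k, ⟪p k - y, u k - b⟫_ℝ
        = ⟪x k, u k + v⟫_ℝ + ⟪x k, -v - b⟫_ℝ + ⟪(p k - x k) - y, u k - b⟫_ℝ := by
      intro k
      simp only [inner_sub_left, inner_sub_right, inner_add_right, inner_neg_left,
        inner_neg_right]
      ring
    have hA : Tendsto (fun k => ⟪x k, u k + v⟫_ℝ) ↑V (𝓝 0) := by
      apply hxk_bd
      have := huv.add_const v
      simpa using this
    have hBt : Tendsto (fun k => ⟪x k, -v - b⟫_ℝ) ↑V (𝓝 ⟪w, -v - b⟫_ℝ) := hweak _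
    have hC : Tendsto (fun k => ⟪(p k - x k) - y, u k - b⟫_ℝ) ↑V
        (𝓝 ⟪(0 : H) - y, -v - b⟫_ℝ) := by
      exact ((hpx.sub_const y).inner (huv.sub_const b)).mono_left hV
    have htot : Tendsto (fun k => ⟪p k - y, u k - b⟫_ℝ) ↑V
        (𝓝 (0 + ⟪w, -v - b⟫_ℝ + ⟪(0 : H) - y, -v - b⟫_ℝ)) := by
      have := (hA.add hBt).add hC
      refine this.congr fun k => (hsplit k).symm
    have hlim0 : (0:ℝ) ≤ 0 + ⟪w, -v - b⟫_ℝ + ⟪(0 : H) - y, -v - b⟫_ℝ :=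
      ge_of_tendsto htot (Filter.Eventually.of_forall hg)
    have : ⟪w - y, -v - b⟫_ℝ = 0 + ⟪w, -v - b⟫_ℝ + ⟪(0 : H) - y, -v - b⟫_ℝ := by
      simp only [inner_sub_left, zero_sub, inner_neg_left]
      ring
    rw [this]
    exact hlim0
  -- T w = v
  have hTwv : T w = v := by
    have hineq : ∀ k, ⟪x k - w, T (x k) - T w⟫_ℝ ≥ β * ‖T (x k) - T w‖ ^ 2 :=
      fun k => hT (x k) w
    have hsplit : ∀ k, ⟪x k - w, T (x k) - T w⟫_ℝ
        = ⟪x k, T (x k) - v⟫_ℝ + ⟪x k, v - T w⟫_ℝ - ⟪w, T (x k) - T w⟫_ℝ := by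
      intro k
      simp only [inner_sub_left, inner_sub_right]
      ring
    have hA : Tendsto (fun k => ⟪x k, T (x k) - v⟫_ℝ) ↑V (𝓝 0) := by
      apply hxk_bd
      simpa using hTv.sub_const v
    have hBt : Tendsto (fun k => ⟪x k, v - T w⟫_ℝ) ↑V (𝓝 ⟪w, v - T w⟫_ℝ) := hweak _
    have hC : Tendsto (fun k => ⟪w, T (x k) - T w⟫_ℝ) ↑V (𝓝 ⟪w, v - T w⟫_ℝ) := by
      exact ((tendsto_const_nhds.inner (hTv.sub_const (T w)))).mono_left hV
    have hLHS : Tendsto (fun k => ⟪x k - w, T (x k) - T w⟫_ℝ) ↑V (𝓝 0) := by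
      have := (hA.add hBt).sub hC
      rw [show (0:ℝ) + ⟪w, v - T w⟫_ℝ - ⟪w, v - T w⟫_ℝ = 0 by ring] at this
      refine this.congr fun k => (hsplit k).symm
    have hRHS : Tendsto (fun k => β * ‖T (x k) - T w‖ ^ 2) ↑V (𝓝 (β * ‖v - T w‖ ^ 2)) := by
      exact ((((hTv.sub_const (T w)).norm.pow 2).const_mul β)).mono_left hV
    have hle : β * ‖v - T w‖ ^ 2 ≤ 0 :=
      le_of_tendsto_of_tendsto' hRHS hLHS fun k => hineq k
    have h0 : ‖v - T w‖ ^ 2 ≤ 0 := by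
      nlinarith [sq_nonneg ‖v - T w‖]
    have : ‖v - T w‖ = 0 := by
      have := sq_nonneg ‖v - T w‖
      have h2 : ‖v - T w‖ ^ 2 = 0 := le_antisymm h0 this
      exact pow_eq_zero_iff (n := 2) (by norm_num) |>.mp h2
    have := norm_eq_zero.mp this
    have := sub_eq_zero.mp this
    exact this.symm
  exact ⟨w, by rw [hTwv]; exact hvBw, hTwv, hweak⟩

theorem stmt11 {H : Type*} [NormedAddCommGroup H] [InnerProductSpace ℝ H] [CompleteSpace H]
    (B : H → Set H)
    (hB : ∀ x y a b, a ∈ B x → b ∈ B y → ⟪x - y, a - b⟫_ℝ ≥ 0)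
    (hBmax : ∀ x a, (∀ y b, b ∈ B y → ⟪x - y, a - b⟫_ℝ ≥ 0) → a ∈ B x)
    (T : H → H) (β : ℝ) (hβ : 0 < β)
    (hT : ∀ x y : H, ⟪x - y, T x - T y⟫_ℝ ≥ β * ‖T x - T y‖ ^ 2)
    (hzer : ∃ z : H, -T z ∈ B z)
    (γ : ℝ) (hγ0 : 0 < γ) (hγ4 : γ < 4 * β)
    (lam : ℕ → ℝ) (hlam : ∀ k, 0 < lam k ∧ lam k ≤ 2 - γ / (2 * β))
    (hdiv : Tendsto (fun n => ∑ k ∈ Finset.range n,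
        lam k * (2 - γ / (2 * β) - lam k)) atTop atTop)
    (JB : H → H)
    (hJB : ∀ x u, JB x = u ↔ x - u ∈ γ • B u)
    (x : ℕ → H)
    (hx : ∀ k, x (k + 1) = x k + lam k • (JB (x k - γ • T (x k)) - x k)) :
    ∃ xb : H, -T xb ∈ B xb ∧
      (∀ y : H, Tendsto (fun k => ⟪x k, y⟫_ℝ) atTop (nhds ⟪xb, y⟫_ℝ)) ∧
      Tendsto (fun k => T (x k)) atTop (nhds (T xb)) := by
  obtain ⟨z₀, hz₀⟩ := hzer
  set δ : ℝ := 2 - γ / (2 * β) with hδdef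
  have hδpos : 0 < δ := lt_of_lt_of_le (hlam 0).1 (hlam 0).2
  set R : H → H := fun a => JB (a - γ • T a) with hR
  set p : ℕ → H := fun k => R (x k) with hp
  have hxs : ∀ k, x (k + 1) = x k + lam k • (p k - x k) := hx
  -- resolvent membership
  have hres : ∀ a : H, γ⁻¹ • ((a - γ • T a) - R a) ∈ B (R a) := by
    intro a
    have h := (hJB (a - γ • T a) (R a)).mp rfl
    obtain ⟨b, hb, hgb⟩ := h
    have : γ⁻¹ • ((a - γ • T a) - R a) = b := by
      rw [← hgb, smul_smul, inv_mul_cancel₀ hγ0.ne', one_smul]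
    rw [this]; exact hb
  -- fixed points
  have hfix : ∀ z : H, -T z ∈ B z → R z = z := by
    intro z hz
    apply (hJB (z - γ • T z) z).mpr
    have : (z - γ • T z) - z = γ • (-T z) := by
      rw [smul_neg]; abel
    rw [this]
    exact Set.smul_mem_smul_set hz
  -- two-point monotonicity
  have hmono2 : ∀ a c : H,
      ⟪R a - R c, ((a - R a) - (c - R c)) - γ • (T a - T c)⟫_ℝ ≥ 0 := by
    intro a c
    have h := hB (R a) (R c) _ _ (hres a) (hres c)
    have hvec : ((a - R a) - (c - R c)) - γ • (T a - T c)
        = γ • (γ⁻¹ • ((a - γ • T a) - R a) - γ⁻¹ • ((c - γ • T c) - R c)) := by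
      have hcan : ∀ w : H, γ • (γ⁻¹ • w) = w := fun w => by
        rw [smul_smul, mul_inv_cancel₀ hγ0.ne', one_smul]
      rw [smul_sub γ (γ⁻¹ • (a - γ • T a - R a)), hcan, hcan, smul_sub]
      abel
    rw [hvec, real_inner_smul_right]
    exact mul_nonneg hγ0.le h
  -- key inequality, two point version
  have hkeyd : ∀ a c : H,
      2 * ⟪a - c, (R a - a) - (R c - c)⟫_ℝ ≤ -δ * ‖(R a - a) - (R c - c)‖ ^ 2 := by
    intro a c
    apply key_ineq' β γ hβ hγ0 (a - c) ((R a - a) - (R c - c)) (T a - T c)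
    · have h1 : (a - c) + ((R a - a) - (R c - c)) = R a - R c := by abel
      have h2 : -((R a - a) - (R c - c)) - γ • (T a - T c)
          = ((a - R a) - (c - R c)) - γ • (T a - T c) := by abel
      rw [h1, h2]
      exact hmono2 a c
    · exact hT a c
  -- key inequality vs a zero
  have hkeyz : ∀ z : H, -T z ∈ B z → ∀ a : H,
      2 * ⟪a - z, R a - a⟫_ℝ ≤ -δ * ‖R a - a‖ ^ 2 := by
    intro z hz a
    have := hkeyd a z
    rw [hfix z hz] at this
    simpa using this
  -- Fejér quantitative
  have hfq : ∀ z : H, -T z ∈ B z → ∀ k,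
      ‖x (k + 1) - z‖ ^ 2 ≤ ‖x k - z‖ ^ 2 - lam k * (δ - lam k) * ‖p k - x k‖ ^ 2 := by
    intro z hz k
    have hxx : x (k + 1) - z = (x k - z) + lam k • (p k - x k) := by
      rw [hxs k]; abel
    rw [hxx, norm_add_smul_sq']
    have hk := hkeyz z hz (x k)
    have hlk := hlam k
    nlinarith [mul_le_mul_of_nonneg_left hk hlk.1.le, sq_nonneg ‖p k - x k‖]
  have hterm_nonneg : ∀ k, 0 ≤ lam k * (δ - lam k) := by
    intro k
    exact mul_nonneg (hlam k).1.le (by linarith [(hlam k).2])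
  have hfejer : ∀ z : H, -T z ∈ B z → ∀ k, ‖x (k + 1) - z‖ ≤ ‖x k - z‖ := by
    intro z hz k
    have h1 := hfq z hz k
    have h2 := hterm_nonneg k
    nlinarith [norm_nonneg (x (k+1) - z), norm_nonneg (x k - z), sq_nonneg ‖p k - x k‖,
      mul_nonneg h2 (sq_nonneg ‖p k - x k‖)]
  have hanti : ∀ z : H, -T z ∈ B z → Antitone fun k => ‖x k - z‖ :=
    fun z hz => antitone_nat_of_succ_le (hfejer z hz)
  -- bounds
  set D₀ : ℝ := ‖x 0 - z₀‖ with hD₀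
  have hDb : ∀ k, ‖x k - z₀‖ ≤ D₀ := fun k => hanti z₀ hz₀ (Nat.zero_le k)
  set M : ℝ := D₀ + ‖z₀‖ with hM
  have hMb : ∀ k, ‖x k‖ ≤ M := by
    intro k
    calc ‖x k‖ = ‖(x k - z₀) + z₀‖ := by rw [sub_add_cancel]
      _ ≤ ‖x k - z₀‖ + ‖z₀‖ := norm_add_le _ _
      _ ≤ M := by rw [hM]; linarith [hDb k]
  have he_bound : ∀ k, ‖T (x k) - T z₀‖ ≤ D₀ / β := by
    intro k
    have h1 := hT (x k) z₀
    have h2 : ⟪x k - z₀, T (x k) - T z₀⟫_ℝ ≤ ‖x k - z₀‖ * ‖T (x k) - T z₀‖ :=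
      real_inner_le_norm _ _
    have h3 : β * ‖T (x k) - T z₀‖ ^ 2 ≤ D₀ * ‖T (x k) - T z₀‖ := by
      calc β * ‖T (x k) - T z₀‖ ^ 2 ≤ ‖x k - z₀‖ * ‖T (x k) - T z₀‖ := le_trans h1 h2
        _ ≤ D₀ * ‖T (x k) - T z₀‖ :=
          mul_le_mul_of_nonneg_right (hDb k) (norm_nonneg _)
    rcases eq_or_lt_of_le (norm_nonneg (T (x k) - T z₀)) with h | h
    · rw [← h]
      positivity
    · rw [le_div_iff₀ hβ]
      nlinarith
  have hD₀0 : 0 ≤ D₀ := norm_nonneg _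
  -- summability
  have hsum : ∀ n, ∑ k ∈ Finset.range n, lam k * (δ - lam k) * ‖p k - x k‖ ^ 2
      ≤ D₀ ^ 2 := by
    intro n
    have key : ∀ n, ∑ k ∈ Finset.range n, lam k * (δ - lam k) * ‖p k - x k‖ ^ 2
        ≤ ‖x 0 - z₀‖ ^ 2 - ‖x n - z₀‖ ^ 2 := by
      intro n
      induction n with
      | zero => simp
      | succ n ih =>
        rw [Finset.sum_range_succ]
        have := hfq z₀ hz₀ n
        linarith
    have := key n
    have := sq_nonneg ‖x n - z₀‖
    rw [hD₀]
    linarith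
  -- residual monotone
  have hpR : ∀ k, R (x k) = p k := fun _ => rfl
  have hrmono : ∀ k, ‖p (k + 1) - x (k + 1)‖ ≤ ‖p k - x k‖ := by
    intro k
    have hk := hkeyd (x (k + 1)) (x k)
    rw [hpR, hpR] at hk
    have hd : x (k + 1) - x k = lam k • (p k - x k) := by rw [hxs k]; abel
    rw [hd, real_inner_smul_left] at hk
    have hnorm : ‖p (k + 1) - x (k + 1)‖ ^ 2
        = ‖p k - x k‖ ^ 2
          + 2 * ((1:ℝ) * ⟪p k - x k, (p (k + 1) - x (k + 1)) - (p k - x k)⟫_ℝ)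
          + (1:ℝ) ^ 2 * ‖(p (k + 1) - x (k + 1)) - (p k - x k)‖ ^ 2 := by
      rw [← norm_add_smul_sq']
      congr 1
      rw [one_smul]
      abel
    have hlk := hlam k
    have hsq : ‖p (k + 1) - x (k + 1)‖ ^ 2 ≤ ‖p k - x k‖ ^ 2 := by
      rw [hnorm]
      nlinarith [sq_nonneg ‖(p (k + 1) - x (k + 1)) - (p k - x k)‖, hlk.1, hlk.2, hδpos]
    nlinarith [norm_nonneg (p (k+1) - x (k+1)), norm_nonneg (p k - x k)]
  -- residual tends to zero
  have hr0 : Tendsto (fun k => ‖p k - x k‖) atTop (𝓝 0) := by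
    have hant : Antitone fun k => ‖p k - x k‖ := antitone_nat_of_succ_le hrmono
    have hbdd : BddBelow (Set.range fun k => ‖p k - x k‖) :=
      ⟨0, fun y ⟨k, hk⟩ => hk ▸ norm_nonneg _⟩
    have htend := tendsto_atTop_ciInf hant hbdd
    set c : ℝ := ⨅ k, ‖p k - x k‖ with hc
    have hc0 : 0 ≤ c := le_ciInf fun k => norm_nonneg _
    rcases eq_or_lt_of_le hc0 with h | h
    · rw [← h] at htend; exact htend
    · exfalso
      have hcle : ∀ k, c ≤ ‖p k - x k‖ := fun k => ciInf_le hbdd k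
      have hbig : ∀ n, ∑ k ∈ Finset.range n, lam k * (δ - lam k) ≤ D₀ ^ 2 / c ^ 2 := by
        intro n
        rw [le_div_iff₀ (by positivity)]
        calc (∑ k ∈ Finset.range n, lam k * (δ - lam k)) * c ^ 2
            = ∑ k ∈ Finset.range n, lam k * (δ - lam k) * c ^ 2 := by
              rw [Finset.sum_mul]
          _ ≤ ∑ k ∈ Finset.range n, lam k * (δ - lam k) * ‖p k - x k‖ ^ 2 := by
              apply Finset.sum_le_sum
              intro k _
              apply mul_le_mul_of_nonneg_left _ (hterm_nonneg k)
              have := hcle k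
              nlinarith
          _ ≤ D₀ ^ 2 := hsum n
      obtain ⟨n, hn⟩ := (hdiv.eventually_gt_atTop (D₀ ^ 2 / c ^ 2)).exists
      exact absurd (hbig n) (not_le.mpr hn)
  have hpx : Tendsto (fun k => p k - x k) atTop (𝓝 0) :=
    tendsto_zero_iff_norm_tendsto_zero.mpr hr0
  -- T (x k) → v
  set v : H := T z₀ with hv
  have hTz : Tendsto (fun k => T (x k)) atTop (𝓝 v) := by
    have hbd : ∀ k, γ * β * ‖T (x k) - v‖ ^ 2
        ≤ ‖p k - x k‖ * (D₀ + γ * (D₀ / β)) := by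
      intro k
      have h := hmono2 (x k) z₀
      rw [hfix z₀ hz₀] at h
      set d : H := x k - z₀ with hd
      set r : H := p k - x k with hr2
      set e : H := T (x k) - v with he
      have hPz : R (x k) - z₀ = d + r := by rw [hd, hr2, hp]; abel
      have hXP : ((x k - R (x k)) - (z₀ - z₀)) - γ • (T (x k) - T z₀)
          = -r - γ • e := by
        rw [hr2, he, hp, hv]; abel
      rw [hPz, hXP] at h
      have hexp : ⟪d + r, -r - γ • e⟫_ℝ
          = -⟪d, r⟫_ℝ - γ * ⟪d, e⟫_ℝ - ‖r‖ ^ 2 - γ * ⟪r, e⟫_ℝ := by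
        rw [← real_inner_self_eq_norm_sq]
        simp only [inner_add_left, inner_sub_right, inner_neg_right, real_inner_smul_right]
        ring
      rw [hexp] at h
      have hcoco : ⟪d, e⟫_ℝ ≥ β * ‖e‖ ^ 2 := hT (x k) z₀
      have h2 : ⟪d, r⟫_ℝ ≥ -(D₀ * ‖r‖) := by
        have := real_inner_le_norm d (-r)
        rw [inner_neg_right] at this
        have hdn : ‖d‖ ≤ D₀ := hDb k
        have : -⟪d, r⟫_ℝ ≤ ‖d‖ * ‖r‖ := by simpa [norm_neg] using this
        nlinarith [norm_nonneg r]
      have h3 : ⟪r, e⟫_ℝ ≥ -(‖r‖ * (D₀ / β)) := by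
        have := real_inner_le_norm r (-e)
        rw [inner_neg_right] at this
        have hen : ‖e‖ ≤ D₀ / β := he_bound k
        have : -⟪r, e⟫_ℝ ≤ ‖r‖ * ‖e‖ := by simpa [norm_neg] using this
        nlinarith [norm_nonneg r]
      have h4 : γ * ⟪d, e⟫_ℝ ≥ γ * (β * ‖e‖ ^ 2) :=
        mul_le_mul_of_nonneg_left hcoco hγ0.le
      nlinarith [sq_nonneg ‖r‖, mul_le_mul_of_nonneg_left h3 hγ0.le]
    have hsq0 : Tendsto (fun k => ‖T (x k) - v‖ ^ 2) atTop (𝓝 0) := by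
      have hC : Tendsto (fun k => ‖p k - x k‖ * (D₀ + γ * (D₀ / β)) / (γ * β))
          atTop (𝓝 0) := by
        have := hr0.mul_const ((D₀ + γ * (D₀ / β)))
        simpa using this.div_const (γ * β)
      refine squeeze_zero (fun k => sq_nonneg _) (fun k => ?_) hC
      rw [le_div_iff₀ (by positivity)]
      linarith [hbd k]
    have hn0 : Tendsto (fun k => ‖T (x k) - v‖) atTop (𝓝 0) := by
      have := hsq0.sqrt
      simpa [Real.sqrt_sq_eq_abs] using this
    have := tendsto_zero_iff_norm_tendsto_zero.mpr hn0
    have h2 := this.add_const v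
    simpa using h2
  -- forward-backward auxiliary sequences for weak_cluster
  set u : ℕ → H := fun k => γ⁻¹ • ((x k - γ • T (x k)) - p k) with hudef
  have huB : ∀ k, u k ∈ B (p k) := fun k => hres (x k)
  have huv : Tendsto u atTop (𝓝 (-v)) := by
    have hueq : ∀ k, u k = (-γ⁻¹) • (p k - x k) - T (x k) := by
      intro k
      show γ⁻¹ • ((x k - γ • T (x k)) - p k) = (-γ⁻¹) • (p k - x k) - T (x k)
      have : (x k - γ • T (x k)) - p k = -(p k - x k) - γ • T (x k) := by abel
      rw [this, smul_sub, smul_neg, smul_smul, inv_mul_cancel₀ hγ0.ne', one_smul,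
        neg_smul]
    have h1 : Tendsto (fun k => (-γ⁻¹) • (p k - x k) - T (x k)) atTop (𝓝 (-v)) := by
      have h2 := hpx.const_smul (-γ⁻¹)
      rw [smul_zero] at h2
      have := h2.sub hTz
      simpa using this
    exact h1.congr fun k => (hueq k).symm
  -- apply weak_cluster to the canonical ultrafilter
  have hatne : (atTop : Filter ℕ).NeBot := atTop_neBot
  obtain ⟨xb, hxbB, hTxb, hwU⟩ := weak_cluster' B hB hBmax T β hβ hT x p u v M hMb huB
    hpx huv hTz (Ultrafilter.of atTop) (Ultrafilter.of_le atTop)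
  -- limits of ‖x k - z‖² exist for zeros z
  have hlimz : ∀ z : H, -T z ∈ B z → ∃ L : ℝ,
      Tendsto (fun k => ‖x k - z‖ ^ 2) atTop (𝓝 L) := by
    intro z hz
    have hant : Antitone fun k => ‖x k - z‖ := hanti z hz
    have hbdd : BddBelow (Set.range fun k => ‖x k - z‖) :=
      ⟨0, fun y ⟨k, hk⟩ => hk ▸ norm_nonneg _⟩
    have := tendsto_atTop_ciInf hant hbdd
    exact ⟨(⨅ k, ‖x k - z‖) ^ 2, by simpa using this.pow 2⟩
  refine ⟨xb, hxbB, ?_, ?_⟩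
  · -- weak convergence along atTop
    intro y
    rw [tendsto_iff_ultrafilter]
    intro V hV
    obtain ⟨w, hwB, hTw, hwV⟩ := weak_cluster' B hB hBmax T β hβ hT x p u v M hMb huB
      hpx huv hTz V hV
    -- show w = xb
    obtain ⟨L1, hL1⟩ := hlimz xb hxbB
    obtain ⟨L2, hL2⟩ := hlimz w hwB
    have hq : Tendsto (fun k => ⟪x k, xb - w⟫_ℝ) atTop
        (𝓝 ((‖xb‖ ^ 2 - ‖w‖ ^ 2 - (L1 - L2)) / 2)) := by
      have hqt : Tendsto (fun k => ‖x k - xb‖ ^ 2 - ‖x k - w‖ ^ 2) atTop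
          (𝓝 (L1 - L2)) := hL1.sub hL2
      have hqeq : ∀ k : ℕ, ⟪x k, xb - w⟫_ℝ
          = (‖xb‖ ^ 2 - ‖w‖ ^ 2 - (‖x k - xb‖ ^ 2 - ‖x k - w‖ ^ 2)) / 2 := by
        intro k
        have e1 : ‖x k - xb‖ ^ 2 = ‖x k‖ ^ 2 - 2 * ⟪x k, xb⟫_ℝ + ‖xb‖ ^ 2 := by
          rw [← real_inner_self_eq_norm_sq, ← real_inner_self_eq_norm_sq,
            ← real_inner_self_eq_norm_sq]
          simp only [inner_sub_left, inner_sub_right, real_inner_comm (x k) xb]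
          ring
        have e2 : ‖x k - w‖ ^ 2 = ‖x k‖ ^ 2 - 2 * ⟪x k, w⟫_ℝ + ‖w‖ ^ 2 := by
          rw [← real_inner_self_eq_norm_sq, ← real_inner_self_eq_norm_sq,
            ← real_inner_self_eq_norm_sq]
          simp only [inner_sub_left, inner_sub_right, real_inner_comm (x k) w]
          ring
        rw [inner_sub_right, e1, e2]
        ring
      have := ((tendsto_const_nhds (x := ‖xb‖ ^ 2 - ‖w‖ ^ 2)).sub hqt).div_const 2
      exact this.congr fun k => (hqeq k).symm
    have hU1 := hwU (xb - w)
    have hV1 := hwV (xb - w)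
    have heq1 : ⟪xb, xb - w⟫_ℝ = (‖xb‖ ^ 2 - ‖w‖ ^ 2 - (L1 - L2)) / 2 :=
      tendsto_nhds_unique hU1 (hq.mono_left (Ultrafilter.of_le atTop))
    have heq2 : ⟪w, xb - w⟫_ℝ = (‖xb‖ ^ 2 - ‖w‖ ^ 2 - (L1 - L2)) / 2 :=
      tendsto_nhds_unique hV1 (hq.mono_left hV)
    have hzero : ⟪xb - w, xb - w⟫_ℝ = 0 := by
      rw [inner_sub_left, heq1, heq2]
      ring
    have : xb - w = 0 := by
      have := inner_self_eq_zero (𝕜 := ℝ).mp hzero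
      exact this
    have hwxb : w = xb := by
      rw [sub_eq_zero] at this
      exact this.symm
    rw [← hwxb]
    exact hwV y
  · rw [hTxb]
    exact hTz
end

section
/- Let B : H ⇉ H be monotone with single-valued full-domain resolvent, T : H → H β-cocoercive, γ ∈ (0, 4β), λ ∈ (0, 2 − γ/(2β)]. If x̄ = J_{γB}(x̄ − γT(x̄)), then for any x ∈ H, setting x⁺ = x + λ(J_{γB}(x − γT(x)) − x), one has ‖x⁺ − x̄‖² + λ(2 − γ/(2β) − λ)‖J_{γB}(x − γT(x)) − x‖² ≤ ‖x − x̄‖². In particular, the relaxed forward–backward map is quasi-nonexpansive for stepsizes up to 4β. -/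
open scoped InnerProductSpace Pointwise

set_option maxHeartbeats 800000 in
theorem stmt12 {H : Type*} [NormedAddCommGroup H] [InnerProductSpace ℝ H]
    (B : H → Set H)
    (hB : ∀ x y a b, a ∈ B x → b ∈ B y → ⟪x - y, a - b⟫_ℝ ≥ 0)
    (T : H → H) (β : ℝ) (hβ : 0 < β)
    (hT : ∀ x y : H, ⟪x - y, T x - T y⟫_ℝ ≥ β * ‖T x - T y‖ ^ 2)
    (γ : ℝ) (hγ0 : 0 < γ) (hγ4 : γ < 4 * β)
    (lam : ℝ) (hlam0 : 0 < lam) (hlam1 : lam ≤ 2 - γ / (2 * β))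
    (JB : H → H)
    (hJB : ∀ x u, JB x = u ↔ x - u ∈ γ • B u)
    (xb : H) (hxb : xb = JB (xb - γ • T xb)) :
    ∀ x : H,
      ‖(x + lam • (JB (x - γ • T x) - x)) - xb‖ ^ 2
          + lam * (2 - γ / (2 * β) - lam) * ‖JB (x - γ • T x) - x‖ ^ 2
        ≤ ‖x - xb‖ ^ 2 ∧
      ‖(x + lam • (JB (x - γ • T x) - x)) - xb‖ ≤ ‖x - xb‖ := by
  intro x
  set u := JB (x - γ • T x) with hu
  clear_value u
  -- membership facts
  have hmem : (x - γ • T x) - u ∈ γ • B u := (hJB _ u).mp hu.symm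
  obtain ⟨a, ha, haa⟩ := hmem
  have hmemb : (xb - γ • T xb) - xb ∈ γ • B xb := (hJB _ xb).mp hxb.symm
  obtain ⟨b, hb, hbb⟩ := hmemb
  have hbb' : γ • b = (xb - γ • T xb) - xb := hbb
  have haa' : γ • a = (x - γ • T x) - u := haa
  have hbeq : γ • b = -(γ • T xb) := by rw [hbb']; abel
  have hmono := hB u xb a b ha hb
  -- key monotonicity inequality
  have key : ⟪u - xb, (x - u) - γ • (T x - T xb)⟫_ℝ ≥ 0 := by
    have h1 : (x - u) - γ • (T x - T xb) = γ • a - γ • b := by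
      rw [haa', hbeq]; rw [smul_sub]; abel
    rw [h1, ← smul_sub, real_inner_smul_right]
    exact mul_nonneg hγ0.le hmono
  have coco := hT x xb
  -- scalar abbreviations
  set p := ⟪u - x, u - x⟫_ℝ with hp
  set q := ⟪u - x, T x - T xb⟫_ℝ with hq
  set r := ⟪x - xb, T x - T xb⟫_ℝ with hr
  set s := ⟪x - xb, u - x⟫_ℝ with hs
  set t := ⟪T x - T xb, T x - T xb⟫_ℝ with ht
  clear_value p q r s t
  have hpnorm : ‖u - x‖ ^ 2 = p := by rw [hp]; exact (real_inner_self_eq_norm_sq _).symm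
  have htnorm : ‖T x - T xb‖ ^ 2 = t := by rw [ht]; exact (real_inner_self_eq_norm_sq _).symm
  have hxnorm : ‖x - xb‖ ^ 2 = ⟪x - xb, x - xb⟫_ℝ := (real_inner_self_eq_norm_sq _).symm
  have hkey2 : -p - s - γ * (q + r) ≥ 0 := by
    have hdecomp : u - xb = (u - x) + (x - xb) := by abel
    have := key
    rw [hdecomp, inner_sub_right] at this
    simp only [inner_add_left, real_inner_smul_right] at this
    have hsym : ⟪u - x, x - u⟫_ℝ = -p := by
      rw [hp]; rw [show (x - u : H) = -(u - x) by abel, inner_neg_right]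
    have hsym2 : ⟪x - xb, x - u⟫_ℝ = -s := by
      rw [hs]; rw [show (x - u : H) = -(u - x) by abel, inner_neg_right]
    rw [hsym, hsym2, ← hq, ← hr] at this
    linarith
  have hcoco2 : r ≥ β * t := by rw [← htnorm]; exact coco
  have hnonneg : p + 4 * β * q + 4 * β ^ 2 * t ≥ 0 := by
    have h0 : (0:ℝ) ≤ ‖(u - x) + (2 * β) • (T x - T xb)‖ ^ 2 := sq_nonneg _
    rw [norm_add_sq_real, real_inner_smul_right, norm_smul, mul_pow, hpnorm, htnorm] at h0
    rw [Real.norm_eq_abs, abs_of_pos (by linarith : (0:ℝ) < 2 * β), ← hq] at h0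
    nlinarith [h0]
  -- central inequality: 2 s + (2 - γ/(2β)) p ≤ 0
  have hcentral : 2 * s + (2 - γ / (2 * β)) * p ≤ 0 := by
    have hb2 : (0:ℝ) < 2 * β := by linarith
    have hdiv : γ / (2 * β) * (2 * β) = γ := div_mul_cancel₀ _ hb2.ne'
    nlinarith [mul_nonneg hγ0.le (mul_nonneg hβ.le (sub_nonneg.mpr hcoco2)),
      mul_nonneg (div_nonneg hγ0.le hb2.le) hnonneg]
  -- expand the norm of x⁺ - xb
  have hexp : ‖(x + lam • (u - x)) - xb‖ ^ 2
      = ‖x - xb‖ ^ 2 + 2 * lam * s + lam ^ 2 * p := by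
    have hd : (x + lam • (u - x)) - xb = (x - xb) + lam • (u - x) := by abel
    rw [hd, norm_add_sq_real, real_inner_smul_right, norm_smul, mul_pow, hpnorm]
    have : ‖lam‖ = lam := by rw [Real.norm_eq_abs, abs_of_pos hlam0]
    rw [this, hs]; ring
  have hpn : 0 ≤ p := by rw [hp]; exact real_inner_self_nonneg
  have hmain : ‖(x + lam • (u - x)) - xb‖ ^ 2
      + lam * (2 - γ / (2 * β) - lam) * ‖u - x‖ ^ 2 ≤ ‖x - xb‖ ^ 2 := by
    rw [hexp, hpnorm]
    have h := mul_nonpos_of_nonneg_of_nonpos hlam0.le hcentral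
    have h' : 2 * lam * s + lam ^ 2 * p + lam * (2 - γ / (2 * β) - lam) * p
        = lam * (2 * s + (2 - γ / (2 * β)) * p) := by ring
    linarith [h, h']
  refine ⟨hmain, ?_⟩
  have h2 : ‖(x + lam • (u - x)) - xb‖ ^ 2 ≤ ‖x - xb‖ ^ 2 := by
    have hcoef : 0 ≤ lam * (2 - γ / (2 * β) - lam) * ‖u - x‖ ^ 2 := by
      apply mul_nonneg (mul_nonneg hlam0.le (by linarith)) (sq_nonneg _)
    linarith
  exact (pow_le_pow_iff_left₀ (norm_nonneg _) (norm_nonneg _) two_ne_zero).mp h2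
end

section
/- Let T : H → H be β-cocoercive, θ > 0, σ ≥ 0, and w ∈ H. Then the strengthening T_w^{(θ,σ)}(x) := T(θx − w) + σx is μ-cocoercive with μ = (θ/β + σ)⁻¹. -/
open scoped InnerProductSpace

theorem stmt15 {H : Type*} [NormedAddCommGroup H] [InnerProductSpace ℝ H]
    (T : H → H) (β : ℝ) (hβ : 0 < β)
    (hT : ∀ x y : H, ⟪x - y, T x - T y⟫_ℝ ≥ β * ‖T x - T y‖ ^ 2)
    (θ σ : ℝ) (hθ : 0 < θ) (hσ : 0 ≤ σ) (w : H) :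
    ∀ x y : H,
      ⟪x - y, (T (θ • x - w) + σ • x) - (T (θ • y - w) + σ • y)⟫_ℝ ≥
        (θ / β + σ)⁻¹ * ‖(T (θ • x - w) + σ • x) - (T (θ • y - w) + σ • y)‖ ^ 2 := by
  intro x y
  set d : H := x - y with hd
  set u : H := T (θ • x - w) - T (θ • y - w) with hu
  have hsub : (θ • x - w) - (θ • y - w) = θ • d := by
    simp [hd, smul_sub]
  have hkey : θ * ⟪d, u⟫_ℝ ≥ β * ‖u‖ ^ 2 := by
    have := hT (θ • x - w) (θ • y - w)
    rwa [hsub, real_inner_smul_left] at this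
  have hcs : ⟪d, u⟫_ℝ ≤ ‖d‖ * ‖u‖ := real_inner_le_norm d u
  have hdecomp : (T (θ • x - w) + σ • x) - (T (θ • y - w) + σ • y) = u + σ • d := by
    simp only [hu, hd, smul_sub]; abel
  rw [hdecomp]
  have hinner : ⟪d, u + σ • d⟫_ℝ = ⟪d, u⟫_ℝ + σ * ‖d‖ ^ 2 := by
    rw [inner_add_right, real_inner_smul_right, real_inner_self_eq_norm_sq]
  have hnorm : ‖u + σ • d‖ ^ 2 = ‖u‖ ^ 2 + 2 * σ * ⟪d, u⟫_ℝ + σ ^ 2 * ‖d‖ ^ 2 := by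
    rw [norm_add_sq_real, real_inner_smul_right, norm_smul, real_inner_comm,
      Real.norm_eq_abs, abs_of_nonneg hσ]
    ring
  rw [hinner, hnorm]
  set p : ℝ := ⟪d, u⟫_ℝ
  have hμpos : 0 < θ / β + σ := by positivity
  rw [ge_iff_le, inv_mul_le_iff₀ hμpos]
  have hnu : (0:ℝ) ≤ ‖u‖ := norm_nonneg u
  have hnd : (0:ℝ) ≤ ‖d‖ := norm_nonneg d
  have hud : β * ‖u‖ ≤ θ * ‖d‖ := by
    rcases eq_or_lt_of_le hnu with h0 | h0
    · nlinarith
    · have : β * ‖u‖ ^ 2 ≤ θ * (‖d‖ * ‖u‖) := by nlinarith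
      nlinarith
  have h1 : θ * p ≥ β * ‖u‖ ^ 2 := hkey
  rw [div_add' _ _ _ (ne_of_gt hβ)]
  rw [div_mul_eq_mul_div, le_div_iff₀ hβ]
  nlinarith [sq_nonneg (θ * ‖d‖ - β * ‖u‖), mul_nonneg hσ (mul_nonneg hnd hnu),
    mul_nonneg hσ (sub_nonneg.2 hcs), mul_nonneg hσ (mul_nonneg hnd (sub_nonneg.2 hud)),
    mul_nonneg hσ hnd]
end

section
/- Let A : H ⇉ H be a set-valued operator, γ > 0, θ > 0, σ ∈ ℝ with 1 + γσ > 0, and q ∈ H. Then for all x ∈ H, u ∈ J_{γ A_{−q}^{(θ,σ)}}(x) if and only if θu + q ∈ J_{(γθ/(1+γσ)) A}( (θ/(1+γσ)) x + q ), where A_{−q}^{(θ,σ)}(z) = A(θz + q) + σz. -/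
open scoped InnerProductSpace

theorem stmt16 {H : Type*} [NormedAddCommGroup H] [InnerProductSpace ℝ H]
    (A : H → Set H) (γ θ σ : ℝ) (hγ : 0 < γ) (hθ : 0 < θ)
    (hσ : 1 + γ * σ > 0) (q : H) :
    ∀ x u : H,
      (∃ a ∈ A (θ • u + q), x - u = γ • (a + σ • u)) ↔
      (∃ a ∈ A (θ • u + q),
        ((θ / (1 + γ * σ)) • x + q) - (θ • u + q) = (γ * θ / (1 + γ * σ)) • a) := by
  intro x u
  have hc : (1 + γ * σ) ≠ 0 := ne_of_gt hσ
  have hθ' : θ ≠ 0 := ne_of_gt hθ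
  have key : ∀ a : H, (x - u = γ • (a + σ • u)) ↔
      (((θ / (1 + γ * σ)) • x + q) - (θ • u + q) = (γ * θ / (1 + γ * σ)) • a) := by
    intro a
    constructor
    · intro h
      have hx : x = (1 + γ * σ) • u + γ • a := by
        linear_combination (norm := module) h
      subst hx
      match_scalars <;> field_simp <;> ring
    · intro h
      have hx : (θ / (1 + γ * σ)) • x = (θ / (1 + γ * σ)) • ((1 + γ * σ) • u + γ • a) := by
        have h1 : (θ / (1 + γ * σ)) • x = θ • u + (γ * θ / (1 + γ * σ)) • a := by
          linear_combination (norm := module) h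
        rw [h1]; match_scalars <;> field_simp <;> ring
      have hx2 : x = (1 + γ * σ) • u + γ • a :=
        smul_right_injective H (div_ne_zero hθ' hc) hx
      linear_combination (norm := module) hx2
  constructor
  · rintro ⟨a, ha, h⟩; exact ⟨a, ha, (key a).mp h⟩
  · rintro ⟨a, ha, h⟩; exact ⟨a, ha, (key a).mpr h⟩
end

section
/- Let A, B : H ⇉ H and T : H → H be set-valued/single-valued operators, θ > 0, σ_A, σ_B, σ_T ∈ ℝ with σ := σ_A + σ_B + σ_T > 0, and q ∈ H with q ∈ ran(Id + (θ/σ)(A+B+T)). If the resolvent J_{(θ/σ)(A+B+T)}(q) is a singleton {p}, then the set of zeros of A_{−q}^{(θ,σ_A)} + B_{−q}^{(θ,σ_B)} + T_{−q}^{(θ,σ_T)} equals { (p − q)/θ }. -/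
open scoped InnerProductSpace

theorem stmt17 {H : Type*} [NormedAddCommGroup H] [InnerProductSpace ℝ H]
    (A B : H → Set H) (T : H → H)
    (θ σA σB σT : ℝ) (hθ : 0 < θ) (hσ : 0 < σA + σB + σT)
    (q p : H)
    (hran : ∃ z : H, ∃ a ∈ A z, ∃ b ∈ B z,
      q = z + (θ / (σA + σB + σT)) • (a + b + T z))
    (hp : {z : H | ∃ a ∈ A z, ∃ b ∈ B z,
      q = z + (θ / (σA + σB + σT)) • (a + b + T z)} = {p}) :
    {z : H | ∃ a ∈ A (θ • z + q), ∃ b ∈ B (θ • z + q),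
        (a + σA • z) + (b + σB • z) + (T (θ • z + q) + σT • z) = 0} =
      {(1 / θ) • (p - q)} := by
  have hσ0 : (σA + σB + σT) ≠ 0 := hσ.ne'
  have hθ0 : θ ≠ 0 := hθ.ne'
  ext z
  simp only [Set.mem_setOf_eq, Set.mem_singleton_iff]
  constructor
  · rintro ⟨a, ha, b, hb, heq⟩
    have hv : a + b + T (θ • z + q) = -((σA + σB + σT) • z) := by
      linear_combination (norm := module) heq
    have key : q = (θ • z + q) + (θ / (σA + σB + σT)) • (a + b + T (θ • z + q)) := by
      rw [hv, smul_neg, smul_smul, div_mul_cancel₀ _ hσ0]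
      module
    have hmem : (θ • z + q) ∈ {z : H | ∃ a ∈ A z, ∃ b ∈ B z,
        q = z + (θ / (σA + σB + σT)) • (a + b + T z)} :=
      ⟨a, ha, b, hb, key⟩
    rw [hp, Set.mem_singleton_iff] at hmem
    have : θ • z = p - q := by rw [← hmem]; abel
    rw [← this, one_div, smul_smul, inv_mul_cancel₀ hθ0, one_smul]
  · rintro rfl
    have hpmem : ∃ a ∈ A p, ∃ b ∈ B p,
        q = p + (θ / (σA + σB + σT)) • (a + b + T p) := by
      have : p ∈ {z : H | ∃ a ∈ A z, ∃ b ∈ B z,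
          q = z + (θ / (σA + σB + σT)) • (a + b + T z)} := by
        rw [hp]; rfl
      exact this
    obtain ⟨a, ha, b, hb, heq⟩ := hpmem
    have hzp : θ • ((1 / θ) • (p - q)) + q = p := by
      rw [smul_smul, mul_one_div, div_self hθ0, one_smul]; abel
    refine ⟨a, by rwa [hzp], b, by rwa [hzp], ?_⟩
    have hv : a + b + T p = ((σA + σB + σT) / θ) • (q - p) := by
      have h1 : (θ / (σA + σB + σT)) • (a + b + T p) = q - p := by
        rw [heq]; abel
      have h2 := congrArg (fun x => ((σA + σB + σT) / θ) • x) h1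
      simp only [smul_smul] at h2
      have hc : (σA + σB + σT) / θ * (θ / (σA + σB + σT)) = 1 := by field_simp
      rwa [hc, one_smul] at h2
    rw [hzp]
    have hsplit : a + σA • (1 / θ) • (p - q) + (b + σB • (1 / θ) • (p - q)) +
        (T p + σT • (1 / θ) • (p - q))
        = (a + b + T p) + (σA + σB + σT) • (1 / θ) • (p - q) := by module
    rw [hsplit, hv]
    match_scalars <;> field_simp <;> ring
end

section
/- Let H be a real Hilbert space, C ⊆ H nonempty, and (x_n) a sequence in H that is Fejér monotone with respect to C (i.e., ‖x_{n+1} − x‖ ≤ ‖x_n − x‖ for every x ∈ C and n ∈ ℕ). If every weak sequential cluster point of (x_n) belongs to C, then (x_n) converges weakly to a point of C. -/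
open Filter Topology
open scoped InnerProductSpace

/-- A bounded sequence in a real Hilbert space has a weakly convergent subsequence. -/
lemma exists_weak_subseq {H : Type*} [NormedAddCommGroup H] [InnerProductSpace ℝ H]
    [CompleteSpace H] (x : ℕ → H) (R : ℝ) (hb : ∀ n, ‖x n‖ ≤ R) :
    ∃ p : H, ∃ φ : ℕ → ℕ, StrictMono φ ∧
      ∀ y : H, Tendsto (fun n => ⟪x (φ n), y⟫_ℝ) atTop (nhds ⟪p, y⟫_ℝ) := by
  have hR0 : 0 ≤ R := le_trans (norm_nonneg _) (hb 0)
  set g : ℕ → ℕ → ℝ := fun n k => ⟪x n, x k⟫_ℝ with hg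
  have hgmem : ∀ n, g n ∈ Set.pi Set.univ (fun _ : ℕ => Set.Icc (-(R*R)) (R*R)) := by
    intro n k _
    have h1 : |g n k| ≤ R * R := by
      refine (abs_real_inner_le_norm (x n) (x k)).trans ?_
      exact mul_le_mul (hb n) (hb k) (norm_nonneg _) hR0
    exact abs_le.1 h1
  have hcomp : IsCompact (Set.pi Set.univ fun _ : ℕ => Set.Icc (-(R*R)) (R*R)) :=
    isCompact_univ_pi fun _ => isCompact_Icc
  obtain ⟨a, -, φ, hφ, hconv⟩ := hcomp.tendsto_subseq hgmem
  have hak : ∀ k, Tendsto (fun n => ⟪x (φ n), x k⟫_ℝ) atTop (nhds (a k)) := by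
    intro k
    exact (tendsto_pi_nhds.1 hconv) k
  -- convergence on the span of the range
  have hspan : ∀ u ∈ Submodule.span ℝ (Set.range x),
      ∃ L, Tendsto (fun n => ⟪x (φ n), u⟫_ℝ) atTop (nhds L) := by
    intro u hu
    induction hu using Submodule.span_induction with
    | mem u hu => obtain ⟨k, rfl⟩ := hu; exact ⟨a k, hak k⟩
    | zero => exact ⟨0, by simpa using (tendsto_const_nhds : Tendsto (fun _ : ℕ => (0:ℝ)) atTop _)⟩
    | add u v _ _ hu hv =>
        obtain ⟨L1, h1⟩ := hu; obtain ⟨L2, h2⟩ := hv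
        exact ⟨L1 + L2, by simpa [inner_add_right] using h1.add h2⟩
    | smul c u _ hu =>
        obtain ⟨L, h⟩ := hu
        exact ⟨c * L, by simpa [real_inner_smul_right] using h.const_mul c⟩
  -- convergence for every vector
  have hcauchy : ∀ y : H, ∃ L, Tendsto (fun n => ⟪x (φ n), y⟫_ℝ) atTop (nhds L) := by
    intro y
    set K := (Submodule.span ℝ (Set.range x)).topologicalClosure with hK
    haveI : CompleteSpace K :=
      (Submodule.isClosed_topologicalClosure _).completeSpace_coe
    set w : H := (Submodule.orthogonalProjection K y : H) with hw
    have hx_mem : ∀ n, x n ∈ K := fun n =>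
      Submodule.le_topologicalClosure _ (Submodule.subset_span ⟨n, rfl⟩)
    have hinner_eq : ∀ n, ⟪x n, y⟫_ℝ = ⟪x n, w⟫_ℝ := by
      intro n
      have h1 : y - w ∈ Kᗮ := Submodule.sub_starProjection_mem_orthogonal y
      have h2 : ⟪x n, y - w⟫_ℝ = 0 := h1 (x n) (hx_mem n)
      have h3 : ⟪x n, y⟫_ℝ - ⟪x n, w⟫_ℝ = 0 := by rw [← inner_sub_right]; exact h2
      linarith
    have hwmem : w ∈ closure ((Submodule.span ℝ (Set.range x) : Submodule ℝ H) : Set H) := by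
      have hwK : w ∈ K := SetLike.coe_mem (Submodule.orthogonalProjection K y)
      rw [← Submodule.topologicalClosure_coe]
      exact hwK
    have hc : CauchySeq (fun n => ⟪x (φ n), w⟫_ℝ) := by
      rw [Metric.cauchySeq_iff]
      intro ε hε
      have hδ : 0 < ε / (3 * (R + 1)) := by positivity
      obtain ⟨u, hu_mem, hu_close⟩ := Metric.mem_closure_iff.1 hwmem _ hδ
      obtain ⟨L, hL⟩ := hspan u hu_mem
      have hLc : CauchySeq (fun n => ⟪x (φ n), u⟫_ℝ) := hL.cauchySeq
      rw [Metric.cauchySeq_iff] at hLc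
      obtain ⟨N, hN⟩ := hLc (ε / 3) (by positivity)
      refine ⟨N, fun m hm n hn => ?_⟩
      have key : ∀ j, |⟪x (φ j), w⟫_ℝ - ⟪x (φ j), u⟫_ℝ| ≤ ε / 3 := by
        intro j
        have h1 : |⟪x (φ j), w - u⟫_ℝ| ≤ ‖x (φ j)‖ * ‖w - u‖ := abs_real_inner_le_norm _ _
        have h2 : ‖x (φ j)‖ * ‖w - u‖ ≤ R * (ε / (3 * (R + 1))) := by
          have hwu : ‖w - u‖ ≤ ε / (3 * (R + 1)) := by
            have := hu_close
            rw [dist_eq_norm] at this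
            linarith
          exact mul_le_mul (hb _) hwu (norm_nonneg _) hR0
        have h3 : R * (ε / (3 * (R + 1))) ≤ ε / 3 := by
          rw [mul_comm, div_mul_eq_mul_div, div_le_div_iff₀ (by positivity) (by norm_num)]
          nlinarith [hR0, hε.le]
        calc |⟪x (φ j), w⟫_ℝ - ⟪x (φ j), u⟫_ℝ| = |⟪x (φ j), w - u⟫_ℝ| := by
              rw [inner_sub_right]
          _ ≤ ε / 3 := le_trans h1 (le_trans h2 h3)
      have hmn := hN m hm n hn
      rw [Real.dist_eq] at hmn ⊢
      have k1 := key m; have k2 := key n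
      have := abs_sub_abs_le_abs_sub (⟪x (φ m), w⟫_ℝ) (⟪x (φ n), w⟫_ℝ)
      calc |⟪x (φ m), w⟫_ℝ - ⟪x (φ n), w⟫_ℝ|
          = |(⟪x (φ m), w⟫_ℝ - ⟪x (φ m), u⟫_ℝ) + (⟪x (φ m), u⟫_ℝ - ⟪x (φ n), u⟫_ℝ)
            + (⟪x (φ n), u⟫_ℝ - ⟪x (φ n), w⟫_ℝ)| := by ring_nf
        _ ≤ |⟪x (φ m), w⟫_ℝ - ⟪x (φ m), u⟫_ℝ| + |⟪x (φ m), u⟫_ℝ - ⟪x (φ n), u⟫_ℝ|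
            + |⟪x (φ n), u⟫_ℝ - ⟪x (φ n), w⟫_ℝ| := abs_add_three _ _ _
        _ < ε := by
            have k2' : |⟪x (φ n), u⟫_ℝ - ⟪x (φ n), w⟫_ℝ| ≤ ε / 3 := by
              rw [abs_sub_comm]; exact k2
            linarith
    obtain ⟨L, hL⟩ := cauchySeq_tendsto_of_complete hc
    refine ⟨L, ?_⟩
    have : (fun n => ⟪x (φ n), y⟫_ℝ) = fun n => ⟪x (φ n), w⟫_ℝ := funext fun n => hinner_eq _
    rw [this]; exact hL
  choose L hL using hcauchy
  have hadd : ∀ y z : H, L (y + z) = L y + L z := fun y z =>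
    tendsto_nhds_unique (hL (y + z)) (by simpa [inner_add_right] using (hL y).add (hL z))
  have hsmul : ∀ (c : ℝ) (y : H), L (c • y) = c * L y := fun c y =>
    tendsto_nhds_unique (hL (c • y)) (by simpa [real_inner_smul_right] using (hL y).const_mul c)
  have hbdd : ∀ y : H, |L y| ≤ R * ‖y‖ := by
    intro y
    have h1 : Tendsto (fun n => |⟪x (φ n), y⟫_ℝ|) atTop (nhds |L y|) := (hL y).abs
    refine le_of_tendsto h1 (Eventually.of_forall fun n => ?_)
    exact (abs_real_inner_le_norm _ _).trans
      (mul_le_mul_of_nonneg_right (hb _) (norm_nonneg _))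
  let F : H →ₗ[ℝ] ℝ :=
    { toFun := L, map_add' := hadd, map_smul' := hsmul }
  let Fc : H →L[ℝ] ℝ := F.mkContinuous R fun y => by
    simpa [F, Real.norm_eq_abs] using hbdd y
  refine ⟨(InnerProductSpace.toDual ℝ H).symm Fc, φ, hφ, fun y => ?_⟩
  have : ⟪(InnerProductSpace.toDual ℝ H).symm Fc, y⟫_ℝ = Fc y :=
    InnerProductSpace.toDual_symm_apply
  rw [this]
  exact hL y

theorem stmt19 {H : Type*} [NormedAddCommGroup H] [InnerProductSpace ℝ H] [CompleteSpace H]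
    (C : Set H) (hC : C.Nonempty) (x : ℕ → H)
    (hFejer : ∀ z ∈ C, ∀ n : ℕ, ‖x (n + 1) - z‖ ≤ ‖x n - z‖)
    (hcluster : ∀ p : H, (∃ φ : ℕ → ℕ, StrictMono φ ∧
        ∀ y : H, Tendsto (fun n => ⟪x (φ n), y⟫_ℝ) atTop (nhds ⟪p, y⟫_ℝ)) → p ∈ C) :
    ∃ p ∈ C, ∀ y : H, Tendsto (fun n => ⟪x n, y⟫_ℝ) atTop (nhds ⟪p, y⟫_ℝ) := by
  obtain ⟨z, hz⟩ := hC
  have hanti : ∀ w ∈ C, Antitone fun n => ‖x n - w‖ := fun w hw =>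
    antitone_nat_of_succ_le fun n => hFejer w hw n
  set R : ℝ := ‖x 0 - z‖ + ‖z‖ with hR
  have hbR : ∀ n, ‖x n‖ ≤ R := by
    intro n
    calc ‖x n‖ = ‖x n - z + z‖ := by rw [sub_add_cancel]
      _ ≤ ‖x n - z‖ + ‖z‖ := norm_add_le _ _
      _ ≤ ‖x 0 - z‖ + ‖z‖ := add_le_add_left (hanti z hz (Nat.zero_le n)) _
  have hnl : ∀ w ∈ C, ∃ l, Tendsto (fun n => ‖x n - w‖) atTop (nhds l) := by
    intro w hw
    refine ⟨_, tendsto_atTop_ciInf (hanti w hw) ⟨0, ?_⟩⟩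
    rintro r ⟨n, rfl⟩
    exact norm_nonneg _
  have hinner : ∀ p ∈ C, ∀ q ∈ C, ∃ Lpq, Tendsto (fun n => ⟪x n, p - q⟫_ℝ) atTop (nhds Lpq) := by
    intro p hp q hq
    obtain ⟨lp, hlp⟩ := hnl p hp
    obtain ⟨lq, hlq⟩ := hnl q hq
    refine ⟨(lq ^ 2 - lp ^ 2 - ‖q‖ ^ 2 + ‖p‖ ^ 2) / 2, ?_⟩
    have key : ∀ n, ⟪x n, p - q⟫_ℝ
        = (‖x n - q‖ ^ 2 - ‖x n - p‖ ^ 2 - ‖q‖ ^ 2 + ‖p‖ ^ 2) / 2 := by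
      intro n
      have h1 : ‖x n - q‖ ^ 2 = ‖x n‖ ^ 2 - 2 * ⟪x n, q⟫_ℝ + ‖q‖ ^ 2 := by
        rw [norm_sub_sq_real]
      have h2 : ‖x n - p‖ ^ 2 = ‖x n‖ ^ 2 - 2 * ⟪x n, p⟫_ℝ + ‖p‖ ^ 2 := by
        rw [norm_sub_sq_real]
      rw [inner_sub_right, h1, h2]; ring
    simp only [key]
    have hT : Tendsto (fun n => (‖x n - q‖ ^ 2 - ‖x n - p‖ ^ 2 - ‖q‖ ^ 2 + ‖p‖ ^ 2) / 2)
        atTop (nhds ((lq ^ 2 - lp ^ 2 - ‖q‖ ^ 2 + ‖p‖ ^ 2) / 2)) :=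
      ((((hlq.pow 2).sub (hlp.pow 2)).sub
        (tendsto_const_nhds : Tendsto (fun _ : ℕ => ‖q‖ ^ 2) atTop _)).add
        (tendsto_const_nhds : Tendsto (fun _ : ℕ => ‖p‖ ^ 2) atTop _)).div_const 2
    exact hT
  have huniq : ∀ p ∈ C, ∀ q ∈ C,
      (∃ φ : ℕ → ℕ, StrictMono φ ∧
        ∀ y, Tendsto (fun n => ⟪x (φ n), y⟫_ℝ) atTop (nhds ⟪p, y⟫_ℝ)) →
      (∃ ψ : ℕ → ℕ, StrictMono ψ ∧
        ∀ y, Tendsto (fun n => ⟪x (ψ n), y⟫_ℝ) atTop (nhds ⟪q, y⟫_ℝ)) → p = q := by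
    rintro p hp q hq ⟨φ, hφ, hφw⟩ ⟨ψ, hψ, hψw⟩
    obtain ⟨Lpq, hLpq⟩ := hinner p hp q hq
    have h1 : Tendsto (fun n => ⟪x (φ n), p - q⟫_ℝ) atTop (nhds Lpq) :=
      hLpq.comp hφ.tendsto_atTop
    have h2 : Tendsto (fun n => ⟪x (ψ n), p - q⟫_ℝ) atTop (nhds Lpq) :=
      hLpq.comp hψ.tendsto_atTop
    have e1 : ⟪p, p - q⟫_ℝ = Lpq := tendsto_nhds_unique (hφw (p - q)) h1
    have e2 : ⟪q, p - q⟫_ℝ = Lpq := tendsto_nhds_unique (hψw (p - q)) h2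
    have e3 : ⟪p - q, p - q⟫_ℝ = 0 := by rw [inner_sub_left, e1, e2]; ring
    have := inner_self_eq_zero.1 e3
    exact sub_eq_zero.1 this
  obtain ⟨p, φ, hφ, hφw⟩ := exists_weak_subseq x R hbR
  have hpC : p ∈ C := hcluster p ⟨φ, hφ, hφw⟩
  refine ⟨p, hpC, fun y => ?_⟩
  by_contra hcon
  rw [Metric.tendsto_atTop] at hcon
  push_neg at hcon
  obtain ⟨ε, hε, hfreq⟩ := hcon
  have hfr : ∃ᶠ n in atTop, ε ≤ dist ⟪x n, y⟫_ℝ ⟪p, y⟫_ℝ := by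
    rw [frequently_atTop]
    intro N
    obtain ⟨n, hn1, hn2⟩ := hfreq N
    exact ⟨n, hn1, hn2⟩
  obtain ⟨ψ, hψ, hψprop⟩ := extraction_of_frequently_atTop hfr
  obtain ⟨q, σ, hσ, hσw⟩ := exists_weak_subseq (x ∘ ψ) R fun n => hbR _
  have hqw : ∀ y' : H, Tendsto (fun n => ⟪x (ψ (σ n)), y'⟫_ℝ) atTop (nhds ⟪q, y'⟫_ℝ) :=
    fun y' => by simpa [Function.comp] using hσw y'
  have hqC : q ∈ C := hcluster q ⟨ψ ∘ σ, hψ.comp hσ, hqw⟩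
  have hqp : q = p := huniq q hqC p hpC ⟨ψ ∘ σ, hψ.comp hσ, hqw⟩ ⟨φ, hφ, hφw⟩
  subst hqp
  have htd : Tendsto (fun n => dist ⟪x (ψ (σ n)), y⟫_ℝ ⟪q, y⟫_ℝ) atTop (nhds 0) := by
    have := hqw y
    simpa [dist_eq_norm] using (tendsto_iff_norm_sub_tendsto_zero.1 this)
  obtain ⟨N, hN⟩ := (Metric.tendsto_atTop.1 (by simpa using htd)) ε hε
  have hge : ε ≤ dist ⟪x (ψ (σ N)), y⟫_ℝ ⟪q, y⟫_ℝ := hψprop (σ N)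
  have hlt := hN N le_rfl
  rw [Real.dist_eq, sub_zero] at hlt
  have : dist ⟪x (ψ (σ N)), y⟫_ℝ ⟪q, y⟫_ℝ < ε := lt_of_abs_lt (by simpa using hlt)
  linarith
end
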